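/- arXiv:1610.09881 — 6 statements merged into one kernel-verified Lean document; each statement's English description precedes it below -/
import Mathlib

section
/- Let η > 1 and M > 0 be real numbers, and set η̃ := min{η, 2}. Then there exists a constant b̃ > 0, depending only on η and M, such that for all a, b ∈ [0, M] one has a^η − b^η ≤ η b^{η−1} (a − b) + b̃ |a − b|^{η̃}. -/
open Real

-- tangent line from above: y^p - x^p ≤ p y^(p-1) (y-x), for 0 ≤ x ≤ y, 1 ≤ p
lemma lem_up (p x y : ℝ) (hp : 1 ≤ p) (hx : 0 ≤ x) (hxy : x ≤ y) :
    y ^ p - x ^ p ≤ p * y ^ (p - 1) * (y - x) := by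
  have hy : 0 ≤ y := hx.trans hxy
  rcases eq_or_lt_of_le hy with h | hy
  · have hx0 : x = 0 := le_antisymm (hxy.trans h.ge) hx
    simp [← h, hx0]
  · set s : ℝ := x / y - 1 with hs
    have hs1 : -1 ≤ s := by
      have : 0 ≤ x / y := div_nonneg hx hy.le
      simp [hs]; linarith
    have hB := one_add_mul_self_le_rpow_one_add hs1 hp
    have h1s : 1 + s = x / y := by ring
    have hpow : (1 + s) ^ p = x ^ p / y ^ p := by
      rw [h1s, div_rpow hx hy.le]
    rw [hpow] at hB
    have hyp : 0 < y ^ p := rpow_pos_of_pos hy p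
    have := mul_le_mul_of_nonneg_left hB hyp.le
    rw [mul_div_cancel₀ _ hyp.ne'] at this
    have hyp1 : y ^ p = y ^ (p - 1) * y := by
      rw [← rpow_add_one hy.ne' (p-1)]; ring_nf
    have hsval : y ^ p * (1 + p * s) = y ^ p + p * y ^ (p-1) * (x - y) := by
      rw [hs]
      field_simp
      rw [hyp1]
      ring
    rw [hsval] at this
    linarith

-- tangent line from below: p x^(p-1) (y - x) ≤ y^p - x^p, for 0 ≤ x ≤ y, 1 < p
lemma lem_low (p x y : ℝ) (hp : 1 < p) (hx : 0 ≤ x) (hxy : x ≤ y) :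
    p * x ^ (p - 1) * (y - x) ≤ y ^ p - x ^ p := by
  have hy : 0 ≤ y := hx.trans hxy
  rcases eq_or_lt_of_le hx with h | hx
  · rw [← h, Real.zero_rpow (by linarith : p - 1 ≠ 0), Real.zero_rpow (by linarith : p ≠ 0)]
    simp [Real.rpow_nonneg hy]
  · set s : ℝ := y / x - 1 with hs
    have hs1 : -1 ≤ s := by
      have : 0 ≤ y / x := div_nonneg hy hx.le
      simp [hs]; linarith
    have hB := one_add_mul_self_le_rpow_one_add hs1 hp.le
    have h1s : 1 + s = y / x := by ring
    have hpow : (1 + s) ^ p = y ^ p / x ^ p := by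
      rw [h1s, div_rpow hy hx.le]
    rw [hpow] at hB
    have hxp : 0 < x ^ p := rpow_pos_of_pos hx p
    have := mul_le_mul_of_nonneg_left hB hxp.le
    rw [mul_div_cancel₀ _ hxp.ne'] at this
    have hxp1 : x ^ p = x ^ (p - 1) * x := by
      rw [← rpow_add_one hx.ne' (p-1)]; ring_nf
    have hsval : x ^ p * (1 + p * s) = x ^ p + p * x ^ (p-1) * (y - x) := by
      rw [hs]
      field_simp
      rw [hxp1]
      ring
    rw [hsval] at this
    linarith

-- subadditivity for 0 ≤ p ≤ 1
lemma lem_subadd (p x d : ℝ) (hx : 0 ≤ x) (hd : 0 ≤ d) (hp0 : 0 ≤ p) (hp1 : p ≤ 1) :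
    (x + d) ^ p ≤ x ^ p + d ^ p := by
  have h := NNReal.rpow_add_le_add_rpow x.toNNReal d.toNNReal hp0 hp1
  have := NNReal.coe_le_coe.2 h
  push_cast at this
  rwa [Real.coe_toNNReal x hx, Real.coe_toNNReal d hd] at this

lemma lemC (η M : ℝ) (hη : 1 < η) (hM : 0 < M) (x y : ℝ) (hx : 0 ≤ x) (hxy : x ≤ y)
    (hyM : y ≤ M) :
    η * ((y ^ (η-1) - x ^ (η-1)) * (y - x)) ≤
      (η * (1 + (η-1) * M ^ (η-2))) * (y - x) ^ min η 2 := by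
  have hd : 0 ≤ y - x := by linarith
  have hy : 0 ≤ y := hx.trans hxy
  have hMp : 0 < M ^ (η - 2) := Real.rpow_pos_of_pos hM _
  rcases le_total η 2 with h2 | h2
  · rw [min_eq_left h2]
    have hsub : y ^ (η-1) ≤ x ^ (η-1) + (y - x) ^ (η-1) := by
      have h := lem_subadd (η-1) x (y - x) hx hd (by linarith) (by linarith)
      rwa [show x + (y - x) = y by ring] at h
    have hdd : (y - x) ^ (η-1) * (y - x) = (y - x) ^ η := by
      rcases eq_or_lt_of_le hd with h | h
      · rw [← h, Real.zero_rpow (by linarith : η - 1 ≠ 0),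
          Real.zero_rpow (by linarith : η ≠ 0)]; ring
      · rw [← Real.rpow_add_one h.ne' (η-1)]; ring_nf
    have hdη : 0 ≤ (y - x) ^ η := Real.rpow_nonneg hd _
    have step : (y ^ (η-1) - x ^ (η-1)) * (y - x) ≤ (y - x) ^ η := by
      rw [← hdd]
      exact mul_le_mul_of_nonneg_right (by linarith) hd
    have hstep2 := mul_le_mul_of_nonneg_left step (by linarith : (0:ℝ) ≤ η)
    have hextra : 0 ≤ η * (η - 1) * M ^ (η-2) * (y - x) ^ η := by
      have h1 : (0:ℝ) ≤ η * (η - 1) := by nlinarith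
      exact mul_nonneg (mul_nonneg h1 hMp.le) hdη
    nlinarith [hstep2, hextra]
  · rw [min_eq_right h2]
    have hd2 : (y - x) ^ ((2:ℝ)) = (y - x) * (y - x) := by
      rw [show ((2:ℝ) = ((2:ℕ):ℝ)) by norm_num, Real.rpow_natCast]; ring
    rw [hd2]
    have hup := lem_up (η-1) x y (by linarith) hx hxy
    rw [show η - 1 - 1 = η - 2 by ring] at hup
    have hle : y ^ (η-2) ≤ M ^ (η-2) := Real.rpow_le_rpow hy hyM (by linarith)
    have hmul := mul_le_mul_of_nonneg_left hle
      (mul_nonneg (by linarith : (0:ℝ) ≤ η - 1) hd)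
    have h3 : y ^ (η-1) - x ^ (η-1) ≤ (η-1) * M ^ (η-2) * (y - x) := by nlinarith
    have h4 := mul_le_mul_of_nonneg_right h3 hd
    have h5 := mul_le_mul_of_nonneg_left h4 (by linarith : (0:ℝ) ≤ η)
    nlinarith [h5, mul_nonneg hd hd, mul_nonneg (mul_nonneg (by linarith : (0:ℝ) ≤ η) hd) hd]

/-- For η > 1 and M > 0 there exists b̃ > 0, depending only on η and M,
such that for all a, b ∈ [0, M], a^η − b^η ≤ η b^{η−1} (a − b) + b̃ |a − b|^{min(η,2)}. -/
theorem stmt0 (η M : ℝ) (hη : 1 < η) (hM : 0 < M) :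
    ∃ btilde : ℝ, 0 < btilde ∧
      ∀ a b : ℝ, a ∈ Set.Icc (0 : ℝ) M → b ∈ Set.Icc (0 : ℝ) M →
        a ^ η - b ^ η ≤ η * b ^ (η - 1) * (a - b) + btilde * |a - b| ^ min η 2 := by
  refine ⟨η * (1 + (η-1) * M ^ (η-2)), ?_, ?_⟩
  · have hMp : 0 < M ^ (η - 2) := Real.rpow_pos_of_pos hM _
    have h1 : 0 < (η - 1) * M ^ (η-2) := mul_pos (by linarith) hMp
    nlinarith
  · rintro a b ⟨ha0, haM⟩ ⟨hb0, hbM⟩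
    rcases le_total b a with hba | hab
    · rw [abs_of_nonneg (by linarith)]
      have h1 := lem_up η b a hη.le hb0 hba
      have h2 := lemC η M hη hM b a hb0 hba haM
      nlinarith
    · rw [abs_of_nonpos (by linarith), show -(a-b) = b - a by ring]
      have h1 := lem_low η a b hη ha0 hab
      have h2 := lemC η M hη hM a b ha0 hab hbM
      nlinarith
end

section
/- Kernel moment estimate: Let N ≥ 1, s ∈ (0,1), γ ∈ (0,1], and β be real with β > 2s and β ≥ γ. Let Ω ⊂ ℝ^N be a bounded measurable set, let M > 0, c₁ > 0, fix x ∈ Ω and a ∈ (0, M]. Then there exists c₄ > 0, depending only on N, s, γ, β, c₁, M and the diameter of Ω (in particular independent of x, a and g), such that: for every measurable g : ℝ^N → [0,∞) with g = 0 a.e. outside Ω and g(y) ≤ c₁ |x−y|^{−(N+2s)} min(a/|x−y|^γ, 1) for a.e. y, one has ∫_{ℝ^N} |x−y|^β g(y) dy ≤ c₄ a^{1−2s/γ}. -/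
open MeasureTheory Metric Set Module
open scoped ENNReal

lemma my_lintegral_fun_norm_addHaar {E : Type*} [NormedAddCommGroup E] [NormedSpace ℝ E]
    [MeasurableSpace E] [BorelSpace E] [Nontrivial E] [FiniteDimensional ℝ E]
    (μ : Measure E) [μ.IsAddHaarMeasure] (f : ℝ → ℝ≥0∞) (hf : Measurable f) :
    ∫⁻ x, f ‖x‖ ∂μ =
      (finrank ℝ E) * μ (ball 0 1) *
        ∫⁻ y in Ioi (0:ℝ), ENNReal.ofReal (y ^ (finrank ℝ E - 1)) * f y := by
  have h1 : ∫⁻ x, f ‖x‖ ∂μ = ∫⁻ x : ({(0:E)}ᶜ : Set E), f ‖x.1‖ ∂(μ.comap (↑)) := by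
    have := lintegral_subtype_comap (μ := μ) (measurableSet_singleton (0:E)).compl
      (fun x => f ‖x‖)
    rw [MeasureTheory.restrict_compl_singleton] at this
    exact this.symm
  have h2 : ∫⁻ x : ({(0:E)}ᶜ : Set E), f ‖x.1‖ ∂(μ.comap (↑)) =
      ∫⁻ p : sphere (0:E) 1 × Ioi (0:ℝ), f p.2
        ∂(μ.toSphere.prod (Measure.volumeIoiPow (finrank ℝ E - 1))) := by
    have := μ.measurePreserving_homeomorphUnitSphereProd.lintegral_comp_emb
      (Homeomorph.measurableEmbedding _) (fun p => f p.2)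
    rw [← this]
    congr 1
    funext x
    simp [homeomorphUnitSphereProd_apply_snd_coe]
  have h3 : ∫⁻ p : sphere (0:E) 1 × Ioi (0:ℝ), f p.2
        ∂(μ.toSphere.prod (Measure.volumeIoiPow (finrank ℝ E - 1))) =
      μ.toSphere univ * ∫⁻ y : Ioi (0:ℝ), f y ∂(Measure.volumeIoiPow (finrank ℝ E - 1)) := by
    rw [lintegral_prod _ (by fun_prop)]
    simp [lintegral_const, mul_comm]
  have h4 : ∫⁻ y : Ioi (0:ℝ), f y ∂(Measure.volumeIoiPow (finrank ℝ E - 1)) =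
      ∫⁻ y in Ioi (0:ℝ), ENNReal.ofReal (y ^ (finrank ℝ E - 1)) * f y := by
    rw [Measure.volumeIoiPow,
      lintegral_withDensity_eq_lintegral_mul _ (by fun_prop) (by fun_prop)]
    exact lintegral_subtype_comap measurableSet_Ioi
      (fun y => ENNReal.ofReal (y ^ (finrank ℝ E - 1)) * f y)
  rw [h1, h2, h3, h4, Measure.toSphere_apply_univ]

section
variable {E : Type*} [NormedAddCommGroup E] [NormedSpace ℝ E]
    [MeasurableSpace E] [BorelSpace E] [Nontrivial E] [FiniteDimensional ℝ E]
    (μ : Measure E) [μ.IsAddHaarMeasure]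

lemma my_lint_ball {p ρ : ℝ} (hρ : 0 < ρ) (hp : -(finrank ℝ E : ℝ) < p) :
    ∫⁻ x, (if ‖x‖ < ρ then ENNReal.ofReal (‖x‖ ^ p) else 0) ∂μ
      = (finrank ℝ E) * μ (ball 0 1) *
          ENNReal.ofReal (ρ ^ ((finrank ℝ E : ℝ) + p) / ((finrank ℝ E : ℝ) + p)) := by
  set n := finrank ℝ E with hn
  have hn1 : 1 ≤ n := Module.finrank_pos
  set q : ℝ := (n : ℝ) - 1 + p with hq
  have hq1 : -1 < q := by simp only [hq]; linarith
  have hq2 : (0:ℝ) < q + 1 := by linarith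
  have hnp : q + 1 = (n : ℝ) + p := by ring
  have hmeas : Measurable (fun y : ℝ => if y < ρ then ENNReal.ofReal (y ^ p) else 0) := by
    exact Measurable.ite measurableSet_Iio (by fun_prop) measurable_const
  rw [my_lintegral_fun_norm_addHaar μ _ hmeas]
  congr 1
  have e1 : ∫⁻ y in Ioi (0:ℝ), ENNReal.ofReal (y ^ (n - 1)) *
        (if y < ρ then ENNReal.ofReal (y ^ p) else 0)
      = ∫⁻ y in Ioi (0:ℝ),
          (Iio ρ).indicator (fun y => ENNReal.ofReal (y ^ (n - 1)) * ENNReal.ofReal (y ^ p)) y := by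
    apply lintegral_congr
    intro y
    by_cases h : y < ρ <;> simp [h, indicator]
  rw [e1, lintegral_indicator measurableSet_Iio, Measure.restrict_restrict measurableSet_Iio,
    Set.Iio_inter_Ioi]
  have e2 : ∫⁻ y in Ioo (0:ℝ) ρ, ENNReal.ofReal (y ^ (n - 1)) * ENNReal.ofReal (y ^ p)
      = ∫⁻ y in Ioo (0:ℝ) ρ, ENNReal.ofReal (y ^ q) := by
    apply setLIntegral_congr_fun measurableSet_Ioo
    intro y hy
    dsimp only
    rw [← ENNReal.ofReal_mul (pow_nonneg hy.1.le _)]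
    congr 1
    rw [← Real.rpow_natCast y (n-1), ← Real.rpow_add hy.1]
    congr 1
    push_cast [hn1]
    ring
  rw [e2]
  have hint : IntegrableOn (fun y : ℝ => y ^ q) (Ioo 0 ρ) := by
    rw [← intervalIntegrable_iff_integrableOn_Ioo_of_le hρ.le]
    exact intervalIntegral.intervalIntegrable_rpow' hq1
  rw [← ofReal_integral_eq_lintegral_ofReal hint ?_]
  · congr 1
    rw [← MeasureTheory.integral_Ioc_eq_integral_Ioo, ← intervalIntegral.integral_of_le hρ.le,
      integral_rpow (Or.inl hq1), Real.zero_rpow (by linarith), hnp]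
    ring
  · filter_upwards [ae_restrict_mem measurableSet_Ioo] with y hy
    exact Real.rpow_nonneg hy.1.le _

lemma my_lint_compl {p ρ : ℝ} (hρ : 0 < ρ) (hp : p < -(finrank ℝ E : ℝ)) :
    ∫⁻ x, (if ‖x‖ < ρ then 0 else ENNReal.ofReal (‖x‖ ^ p)) ∂μ
      = (finrank ℝ E) * μ (ball 0 1) *
          ENNReal.ofReal (ρ ^ ((finrank ℝ E : ℝ) + p) / (-((finrank ℝ E : ℝ) + p))) := by
  set n := finrank ℝ E with hn
  have hn1 : 1 ≤ n := Module.finrank_pos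
  set q : ℝ := (n : ℝ) - 1 + p with hq
  have hq1 : q < -1 := by simp only [hq]; linarith
  have hnp : q + 1 = (n : ℝ) + p := by ring
  have hmeas : Measurable (fun y : ℝ => if y < ρ then 0 else ENNReal.ofReal (y ^ p)) := by
    exact Measurable.ite measurableSet_Iio measurable_const (by fun_prop)
  rw [my_lintegral_fun_norm_addHaar μ _ hmeas]
  congr 1
  have e1 : ∫⁻ y in Ioi (0:ℝ), ENNReal.ofReal (y ^ (n - 1)) *
        (if y < ρ then 0 else ENNReal.ofReal (y ^ p))
      = ∫⁻ y in Ioi (0:ℝ),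
          (Ici ρ).indicator (fun y => ENNReal.ofReal (y ^ (n - 1)) * ENNReal.ofReal (y ^ p)) y := by
    apply lintegral_congr
    intro y
    by_cases h : y < ρ
    · simp [h, indicator, not_le.mpr h]
    · simp [h, indicator, not_lt.mp h]
  rw [e1, lintegral_indicator measurableSet_Ici, Measure.restrict_restrict measurableSet_Ici]
  have hIci : Ici ρ ∩ Ioi (0:ℝ) = Ici ρ := by
    apply inter_eq_left.mpr
    intro y hy
    exact lt_of_lt_of_le hρ hy
  rw [hIci, ← Measure.restrict_congr_set Ioi_ae_eq_Ici]
  have e2 : ∫⁻ y in Ioi ρ, ENNReal.ofReal (y ^ (n - 1)) * ENNReal.ofReal (y ^ p)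
      = ∫⁻ y in Ioi ρ, ENNReal.ofReal (y ^ q) := by
    apply setLIntegral_congr_fun measurableSet_Ioi
    intro y hy
    dsimp only
    have hy0 : (0:ℝ) < y := hρ.trans hy
    rw [← ENNReal.ofReal_mul (pow_nonneg hy0.le _)]
    congr 1
    rw [← Real.rpow_natCast y (n-1), ← Real.rpow_add hy0]
    congr 1
    push_cast [hn1]
    ring
  rw [e2, ← ofReal_integral_eq_lintegral_ofReal (integrableOn_Ioi_rpow_of_lt hq1 hρ) ?_]
  · congr 1
    rw [integral_Ioi_rpow_of_lt hq1 hρ, hnp, div_eq_mul_inv, div_eq_mul_inv,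
      show (-((n:ℝ) + p)) = -((n:ℝ)+p) by ring, inv_neg, mul_neg, neg_mul]
  · filter_upwards [ae_restrict_mem measurableSet_Ioi] with y hy
    have : (0:ℝ) < y := hρ.trans hy
    exact Real.rpow_nonneg this.le _

lemma my_reduce (β : ℝ) (x : E) (g : E → ℝ) (hgm : Measurable g)
    (hgpos : ∀ y, 0 ≤ g y) (H : ℝ → ℝ≥0∞) (hH : Measurable H)
    (hbd : ∀ᵐ y ∂μ, ENNReal.ofReal (‖x - y‖ ^ β * g y) ≤ H ‖x - y‖)
    {c : ℝ} (hc : 0 ≤ c) (hint : ∫⁻ z, H ‖z‖ ∂μ ≤ ENNReal.ofReal c) :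
    ∫ y, ‖x - y‖ ^ β * g y ∂μ ≤ c := by
  have hmeas : Measurable fun y => ‖x - y‖ ^ β * g y := by fun_prop
  rw [integral_eq_lintegral_of_nonneg_ae
    (Filter.Eventually.of_forall fun y => mul_nonneg (Real.rpow_nonneg (norm_nonneg _) _)
      (hgpos y)) hmeas.aestronglyMeasurable]
  apply ENNReal.toReal_le_of_le_ofReal hc
  calc ∫⁻ y, ENNReal.ofReal (‖x - y‖ ^ β * g y) ∂μ
      ≤ ∫⁻ y, H ‖x - y‖ ∂μ := lintegral_mono_ae hbd
    _ = ∫⁻ z, H ‖z‖ ∂μ :=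
        (Measure.measurePreserving_sub_left μ x).lintegral_comp (hH.comp measurable_norm)
    _ ≤ ENNReal.ofReal c := hint

end

set_option maxHeartbeats 1000000 in
/-- Kernel moment estimate. -/
theorem stmt2 (N : ℕ) (hN : 1 ≤ N) (s γ β : ℝ)
    (hs : s ∈ Set.Ioo (0 : ℝ) 1) (hγ : γ ∈ Set.Ioc (0 : ℝ) 1)
    (hβs : 2 * s < β) (hβγ : γ ≤ β)
    (Ω : Set (EuclideanSpace ℝ (Fin N))) (hΩmeas : MeasurableSet Ω)
    (hΩbdd : Bornology.IsBounded Ω)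
    (M c₁ : ℝ) (hM : 0 < M) (hc₁ : 0 < c₁) :
    ∃ c₄ : ℝ, 0 < c₄ ∧
      ∀ x ∈ Ω, ∀ a ∈ Set.Ioc (0 : ℝ) M,
        ∀ g : EuclideanSpace ℝ (Fin N) → ℝ, Measurable g → (∀ y, 0 ≤ g y) →
          (∀ᵐ y ∂volume, y ∉ Ω → g y = 0) →
          (∀ᵐ y ∂volume,
            g y ≤ c₁ * ‖x - y‖ ^ (-((N : ℝ) + 2 * s)) * min (a / ‖x - y‖ ^ γ) 1) →
          ∫ y, ‖x - y‖ ^ β * g y ≤ c₄ * a ^ (1 - 2 * s / γ) := by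
  classical
  obtain ⟨hs0, hs1⟩ := hs
  obtain ⟨hγ0, hγ1⟩ := hγ
  haveI : Nontrivial (EuclideanSpace ℝ (Fin N)) :=
    nontrivial_of_finrank_pos (R := ℝ) (by rw [finrank_euclideanSpace_fin]; omega)
  have hfr : finrank ℝ (EuclideanSpace ℝ (Fin N)) = N := finrank_euclideanSpace_fin
  obtain ⟨C, hC⟩ := Metric.isBounded_iff.mp hΩbdd
  set R : ℝ := max C 1 with hRdef
  have hR1 : (1:ℝ) ≤ R := le_max_right _ _
  have hR0 : (0:ℝ) < R := lt_of_lt_of_le one_pos hR1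
  have hdist : ∀ x ∈ Ω, ∀ y ∈ Ω, ‖x - y‖ ≤ R := by
    intro x hx y hy
    rw [← dist_eq_norm]
    exact (hC hx hy).trans (le_max_left _ _)
  set κ : ℝ≥0∞ := (N : ℝ≥0∞) * volume (ball (0 : EuclideanSpace ℝ (Fin N)) 1) with hκdef
  have hκtop : κ ≠ ⊤ := ENNReal.mul_ne_top (by simp) measure_ball_lt_top.ne
  set m : ℝ := κ.toReal with hmdef
  have hm0 : 0 ≤ m := ENNReal.toReal_nonneg
  have hκm : κ = ENNReal.ofReal m := (ENNReal.ofReal_toReal hκtop).symm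
  have hβ0 : (0:ℝ) < β := lt_of_le_of_lt (by positivity) hβs
  rcases le_or_gt γ (2*s) with hcase | hcase
  · -- Case 1 : γ ≤ 2s, exponent t = 1 - 2s/γ ≤ 0
    have ht0 : 1 - 2*s/γ ≤ 0 := by
      rw [sub_nonpos, le_div_iff₀ hγ0]
      linarith
    set C0 : ℝ := c₁ * (m * ((R+1) ^ (β - 2*s) / (β - 2*s))) with hC0def
    have hC0 : 0 ≤ C0 := by
      apply mul_nonneg hc₁.le
      apply mul_nonneg hm0
      exact div_nonneg (by positivity) (by linarith)
    refine ⟨(C0 + 1) * M ^ (2*s/γ - 1), mul_pos (by linarith) (Real.rpow_pos_of_pos hM _), ?_⟩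
    intro x hx a ha g hgm hgpos hgΩ hgle
    set K1 : ℝ≥0∞ := ENNReal.ofReal c₁ with hK1def
    set f₁ : ℝ → ℝ≥0∞ := fun r => if r < R+1 then ENNReal.ofReal (r ^ (β - 2*s - (N:ℝ))) else 0
      with hf₁def
    have hmf₁ : Measurable f₁ :=
      Measurable.ite measurableSet_Iio (by fun_prop) measurable_const
    apply my_reduce volume β x g hgm hgpos (fun r => K1 * f₁ r) (by fun_prop)
    · -- pointwise bound
      filter_upwards [hgΩ, hgle] with y h1 h2
      by_cases hyΩ : y ∈ Ω
      · have hr0 : (0:ℝ) ≤ ‖x - y‖ := norm_nonneg _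
        have hrR : ‖x - y‖ ≤ R := hdist x hx y hyΩ
        have hin : ‖x - y‖ < R + 1 := by linarith
        rcases eq_or_lt_of_le hr0 with h0 | hrpos
        · rw [← h0, Real.zero_rpow (ne_of_gt hβ0), zero_mul, ENNReal.ofReal_zero]
          exact zero_le
        · have hmin1 : min (a / ‖x - y‖ ^ γ) 1 ≤ 1 := min_le_right _ _
          have key : ‖x - y‖ ^ β * g y ≤ c₁ * ‖x - y‖ ^ (β - 2*s - (N:ℝ)) := by
            calc ‖x - y‖ ^ β * g y
                ≤ ‖x - y‖ ^ β * (c₁ * ‖x - y‖ ^ (-((N:ℝ) + 2*s)) * min (a / ‖x - y‖ ^ γ) 1) :=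
                  mul_le_mul_of_nonneg_left h2 (Real.rpow_nonneg hr0 _)
              _ ≤ ‖x - y‖ ^ β * (c₁ * ‖x - y‖ ^ (-((N:ℝ) + 2*s)) * 1) := by
                  apply mul_le_mul_of_nonneg_left _ (Real.rpow_nonneg hr0 _)
                  apply mul_le_mul_of_nonneg_left hmin1
                  positivity
              _ = c₁ * (‖x - y‖ ^ β * ‖x - y‖ ^ (-((N:ℝ) + 2*s))) := by ring
              _ = c₁ * ‖x - y‖ ^ (β - 2*s - (N:ℝ)) := by
                  rw [← Real.rpow_add hrpos]
                  congr 1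
                  ring
          simp only [hf₁def, if_pos hin]
          rw [← ENNReal.ofReal_mul hc₁.le]
          exact ENNReal.ofReal_le_ofReal key
      · rw [h1 hyΩ, mul_zero, ENNReal.ofReal_zero]
        exact zero_le
    · exact mul_nonneg (mul_nonneg (by linarith) (Real.rpow_pos_of_pos hM _).le)
        (Real.rpow_pos_of_pos ha.1 _).le
    · -- integral bound
      have hb := my_lint_ball (μ := (volume : Measure (EuclideanSpace ℝ (Fin N))))
        (ρ := R + 1) (p := β - 2*s - (N:ℝ)) (by linarith)
        (by rw [hfr]; linarith)
      rw [hfr] at hb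
      rw [show ((N:ℝ) + (β - 2*s - (N:ℝ))) = β - 2*s by ring] at hb
      have hb' : (∫⁻ z : EuclideanSpace ℝ (Fin N), f₁ ‖z‖)
          = κ * ENNReal.ofReal ((R+1) ^ (β - 2*s) / (β - 2*s)) := hb
      calc ∫⁻ z, K1 * f₁ ‖z‖
          = K1 * ∫⁻ z, f₁ ‖z‖ :=
            lintegral_const_mul K1
              (show Measurable fun z : EuclideanSpace ℝ (Fin N) => f₁ ‖z‖ from
                hmf₁.comp measurable_norm)
        _ = K1 * (κ * ENNReal.ofReal ((R+1) ^ (β - 2*s) / (β - 2*s))) := by rw [hb']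
        _ = ENNReal.ofReal C0 := by
            rw [hκm, hK1def, ← ENNReal.ofReal_mul hm0, ← ENNReal.ofReal_mul hc₁.le]
        _ ≤ ENNReal.ofReal ((C0 + 1) * M ^ (2*s/γ - 1) * a ^ (1 - 2*s/γ)) := by
            apply ENNReal.ofReal_le_ofReal
            have hMa : M ^ (1 - 2*s/γ) ≤ a ^ (1 - 2*s/γ) :=
              Real.rpow_le_rpow_of_nonpos ha.1 ha.2 ht0
            have hMM : M ^ (2*s/γ - 1) * M ^ (1 - 2*s/γ) = 1 := by
              rw [← Real.rpow_add hM]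
              norm_num
            have hMpos : (0:ℝ) < M ^ (2*s/γ - 1) := Real.rpow_pos_of_pos hM _
            calc C0 = C0 * (M ^ (2*s/γ - 1) * M ^ (1 - 2*s/γ)) := by rw [hMM, mul_one]
              _ ≤ (C0 + 1) * (M ^ (2*s/γ - 1) * a ^ (1 - 2*s/γ)) := by
                  apply mul_le_mul (by linarith) (by gcongr) (by positivity) (by linarith)
              _ = (C0 + 1) * M ^ (2*s/γ - 1) * a ^ (1 - 2*s/γ) := by ring
  · -- Case 2 : 2s < γ
    have hγ2s : (0:ℝ) < γ - 2*s := by linarith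
    set c₄ : ℝ := c₁ * R ^ (β - γ) * m * (1/(γ - 2*s) + 1/(2*s)) + 1 with hc₄def
    have hk0 : (0:ℝ) ≤ c₁ * R ^ (β - γ) := by positivity
    have hsum0 : (0:ℝ) ≤ 1/(γ - 2*s) + 1/(2*s) := by positivity
    have hc₄0 : (0:ℝ) < c₄ := by
      have h := mul_nonneg (mul_nonneg hk0 hm0) hsum0
      rw [hc₄def]
      linarith
    refine ⟨c₄, hc₄0, ?_⟩
    intro x hx a ha g hgm hgpos hgΩ hgle
    set ρ : ℝ := a ^ (γ⁻¹) with hρdef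
    have hρ0 : (0:ℝ) < ρ := Real.rpow_pos_of_pos ha.1 _
    have hργ : ρ ^ γ = a := by
      rw [hρdef, ← Real.rpow_mul ha.1.le, inv_mul_cancel₀ (ne_of_gt hγ0), Real.rpow_one]
    set T : ℝ := a ^ (1 - 2*s/γ) with hTdef
    have hT0 : (0:ℝ) < T := Real.rpow_pos_of_pos ha.1 _
    have hTρ1 : ρ ^ (γ - 2*s) = T := by
      rw [hρdef, ← Real.rpow_mul ha.1.le, hTdef]
      congr 1
      field_simp
    have hTρ2 : a * ρ ^ (-(2*s)) = T := by
      rw [hρdef, ← Real.rpow_mul ha.1.le]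
      nth_rewrite 1 [← Real.rpow_one a]
      rw [← Real.rpow_add ha.1, hTdef]
      congr 1
      field_simp
      ring
    set K : ℝ≥0∞ := ENNReal.ofReal (c₁ * R ^ (β - γ)) with hKdef
    set f₁ : ℝ → ℝ≥0∞ := fun r => if r < ρ then ENNReal.ofReal (r ^ (γ - 2*s - (N:ℝ))) else 0
      with hf₁def
    set f₂ : ℝ → ℝ≥0∞ := fun r => if r < ρ then 0 else ENNReal.ofReal (r ^ (-(2*s) - (N:ℝ)))
      with hf₂def
    have hmf₁ : Measurable f₁ :=
      Measurable.ite measurableSet_Iio (by fun_prop) measurable_const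
    have hmf₂ : Measurable f₂ :=
      Measurable.ite measurableSet_Iio measurable_const (by fun_prop)
    apply my_reduce volume β x g hgm hgpos
      (fun r => K * (f₁ r + ENNReal.ofReal a * f₂ r)) (by fun_prop)
    · -- pointwise bound
      filter_upwards [hgΩ, hgle] with y h1 h2
      by_cases hyΩ : y ∈ Ω
      · have hr0 : (0:ℝ) ≤ ‖x - y‖ := norm_nonneg _
        have hrR : ‖x - y‖ ≤ R := hdist x hx y hyΩ
        rcases eq_or_lt_of_le hr0 with h0 | hrpos
        · rw [← h0, Real.zero_rpow (ne_of_gt hβ0), zero_mul, ENNReal.ofReal_zero]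
          exact zero_le
        · by_cases hcut : ‖x - y‖ < ρ
          · have key : ‖x - y‖ ^ β * g y
                ≤ (c₁ * R ^ (β - γ)) * ‖x - y‖ ^ (γ - 2*s - (N:ℝ)) := by
              have hmin1 : min (a / ‖x - y‖ ^ γ) 1 ≤ 1 := min_le_right _ _
              calc ‖x - y‖ ^ β * g y
                  ≤ ‖x - y‖ ^ β * (c₁ * ‖x - y‖ ^ (-((N:ℝ) + 2*s)) * min (a / ‖x - y‖ ^ γ) 1) :=
                    mul_le_mul_of_nonneg_left h2 (Real.rpow_nonneg hr0 _)
                _ ≤ ‖x - y‖ ^ β * (c₁ * ‖x - y‖ ^ (-((N:ℝ) + 2*s)) * 1) := by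
                    apply mul_le_mul_of_nonneg_left _ (Real.rpow_nonneg hr0 _)
                    apply mul_le_mul_of_nonneg_left hmin1
                    positivity
                _ = c₁ * (‖x - y‖ ^ (β - γ) * ‖x - y‖ ^ (γ - 2*s - (N:ℝ))) := by
                    rw [← Real.rpow_add hrpos]
                    rw [show (β - γ + (γ - 2*s - (N:ℝ))) = β + -((N:ℝ) + 2*s) by ring,
                      Real.rpow_add hrpos]
                    ring
                _ ≤ c₁ * (R ^ (β - γ) * ‖x - y‖ ^ (γ - 2*s - (N:ℝ))) := by
                    have h8 : ‖x - y‖ ^ (β - γ) ≤ R ^ (β - γ) :=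
                      Real.rpow_le_rpow hr0 hrR (by linarith)
                    have h9 : (0:ℝ) ≤ ‖x - y‖ ^ (γ - 2*s - (N:ℝ)) := Real.rpow_nonneg hr0 _
                    apply mul_le_mul_of_nonneg_left _ hc₁.le
                    exact mul_le_mul_of_nonneg_right h8 h9
                _ = (c₁ * R ^ (β - γ)) * ‖x - y‖ ^ (γ - 2*s - (N:ℝ)) := by ring
            simp only [hf₁def, hf₂def, if_pos hcut, mul_zero, add_zero]
            rw [hKdef, ← ENNReal.ofReal_mul hk0]
            exact ENNReal.ofReal_le_ofReal key
          · have hrγ : a ≤ ‖x - y‖ ^ γ := by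
              rw [← hργ]
              exact Real.rpow_le_rpow hρ0.le (not_lt.mp hcut) hγ0.le
            have hrγ0 : (0:ℝ) < ‖x - y‖ ^ γ := Real.rpow_pos_of_pos hrpos _
            have key : ‖x - y‖ ^ β * g y
                ≤ (c₁ * R ^ (β - γ)) * (a * ‖x - y‖ ^ (-(2*s) - (N:ℝ))) := by
              have hmin2 : min (a / ‖x - y‖ ^ γ) 1 ≤ a / ‖x - y‖ ^ γ := min_le_left _ _
              calc ‖x - y‖ ^ β * g y
                  ≤ ‖x - y‖ ^ β * (c₁ * ‖x - y‖ ^ (-((N:ℝ) + 2*s)) * min (a / ‖x - y‖ ^ γ) 1) :=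
                    mul_le_mul_of_nonneg_left h2 (Real.rpow_nonneg hr0 _)
                _ ≤ ‖x - y‖ ^ β * (c₁ * ‖x - y‖ ^ (-((N:ℝ) + 2*s)) * (a / ‖x - y‖ ^ γ)) := by
                    apply mul_le_mul_of_nonneg_left _ (Real.rpow_nonneg hr0 _)
                    apply mul_le_mul_of_nonneg_left hmin2
                    positivity
                _ = c₁ * a * (‖x - y‖ ^ β * ‖x - y‖ ^ (-((N:ℝ) + 2*s)) * ‖x - y‖ ^ (-γ)) := by
                    rw [Real.rpow_neg hr0 γ]
                    field_simp
                _ = c₁ * a * (‖x - y‖ ^ (β - γ) * ‖x - y‖ ^ (-(2*s) - (N:ℝ))) := by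
                    rw [← Real.rpow_add hrpos, ← Real.rpow_add hrpos, ← Real.rpow_add hrpos]
                    congr 2
                    ring
                _ ≤ c₁ * a * (R ^ (β - γ) * ‖x - y‖ ^ (-(2*s) - (N:ℝ))) := by
                    have h8 : ‖x - y‖ ^ (β - γ) ≤ R ^ (β - γ) :=
                      Real.rpow_le_rpow hr0 hrR (by linarith)
                    have h9 : (0:ℝ) ≤ ‖x - y‖ ^ (-(2*s) - (N:ℝ)) := Real.rpow_nonneg hr0 _
                    apply mul_le_mul_of_nonneg_left _ (mul_pos hc₁ ha.1).le
                    exact mul_le_mul_of_nonneg_right h8 h9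
                _ = (c₁ * R ^ (β - γ)) * (a * ‖x - y‖ ^ (-(2*s) - (N:ℝ))) := by ring
            simp only [hf₁def, hf₂def, if_neg hcut, zero_add]
            rw [hKdef, ← ENNReal.ofReal_mul ha.1.le, ← ENNReal.ofReal_mul hk0]
            exact ENNReal.ofReal_le_ofReal key
      · rw [h1 hyΩ, mul_zero, ENNReal.ofReal_zero]
        exact zero_le
    · exact mul_nonneg hc₄0.le (Real.rpow_pos_of_pos ha.1 _).le
    · -- integral bound
      have hb := my_lint_ball (μ := (volume : Measure (EuclideanSpace ℝ (Fin N))))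
        (ρ := ρ) (p := γ - 2*s - (N:ℝ)) hρ0 (by rw [hfr]; linarith)
      rw [hfr, show ((N:ℝ) + (γ - 2*s - (N:ℝ))) = γ - 2*s by ring] at hb
      have hcp := my_lint_compl (μ := (volume : Measure (EuclideanSpace ℝ (Fin N))))
        (ρ := ρ) (p := -(2*s) - (N:ℝ)) hρ0 (by rw [hfr]; linarith)
      rw [hfr, show ((N:ℝ) + (-(2*s) - (N:ℝ))) = -(2*s) by ring,
        show (-(-(2*s))) = 2*s by ring] at hcp
      have hb' : (∫⁻ z : EuclideanSpace ℝ (Fin N), f₁ ‖z‖)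
          = κ * ENNReal.ofReal (ρ ^ (γ - 2*s) / (γ - 2*s)) := hb
      have hcp' : (∫⁻ z : EuclideanSpace ℝ (Fin N), f₂ ‖z‖)
          = κ * ENNReal.ofReal (ρ ^ (-(2*s)) / (2*s)) := hcp
      have hmn₁ : Measurable fun z : EuclideanSpace ℝ (Fin N) => f₁ ‖z‖ :=
        hmf₁.comp measurable_norm
      have hmn₂ : Measurable fun z : EuclideanSpace ℝ (Fin N) => f₂ ‖z‖ :=
        hmf₂.comp measurable_norm
      have hnn1 : (0:ℝ) ≤ m * (ρ ^ (γ - 2*s) / (γ - 2*s)) :=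
        mul_nonneg hm0 (div_nonneg (Real.rpow_nonneg hρ0.le _) hγ2s.le)
      have hnn2 : (0:ℝ) ≤ a * (m * (ρ ^ (-(2*s)) / (2*s))) :=
        mul_nonneg ha.1.le (mul_nonneg hm0
          (div_nonneg (Real.rpow_nonneg hρ0.le _) (by linarith)))
      calc ∫⁻ z, K * (f₁ ‖z‖ + ENNReal.ofReal a * f₂ ‖z‖)
          = K * ∫⁻ z, (f₁ ‖z‖ + ENNReal.ofReal a * f₂ ‖z‖) :=
            lintegral_const_mul K (hmn₁.add (measurable_const.mul hmn₂))
        _ = K * ((∫⁻ z, f₁ ‖z‖) + ENNReal.ofReal a * ∫⁻ z, f₂ ‖z‖) := by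
            rw [lintegral_add_left hmn₁, lintegral_const_mul _ hmn₂]
        _ = K * (κ * ENNReal.ofReal (ρ ^ (γ - 2*s) / (γ - 2*s))
              + ENNReal.ofReal a * (κ * ENNReal.ofReal (ρ ^ (-(2*s)) / (2*s)))) := by
            rw [hb', hcp']
        _ = ENNReal.ofReal ((c₁ * R ^ (β - γ)) * (m * (ρ ^ (γ - 2*s) / (γ - 2*s))
              + a * (m * (ρ ^ (-(2*s)) / (2*s))))) := by
            rw [hκm, hKdef]
            rw [← ENNReal.ofReal_mul hm0, ← ENNReal.ofReal_mul hm0,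
              ← ENNReal.ofReal_mul ha.1.le,
              ← ENNReal.ofReal_add hnn1 hnn2,
              ← ENNReal.ofReal_mul hk0]
        _ ≤ ENNReal.ofReal (c₄ * a ^ (1 - 2*s/γ)) := by
            apply ENNReal.ofReal_le_ofReal
            have e2' : a * (m * (ρ ^ (-(2*s)) / (2*s))) = m * (T / (2*s)) := by
              rw [← hTρ2]
              ring
            rw [hTρ1, e2', ← hTdef]
            have : (c₁ * R ^ (β - γ)) * (m * (T/(γ - 2*s)) + m * (T/(2*s)))
                = (c₁ * R ^ (β - γ) * m * (1/(γ - 2*s) + 1/(2*s))) * T := by ring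
            rw [this, hc₄def]
            nlinarith [hT0.le]
end

section
/- Uniform bound on the nonlocal operator applied to a fractional power of a Hölder function: Let N ≥ 1, s ∈ (0,1), γ ∈ (0,1], and σ ∈ (0,1] with γσ > 2s. Let M, c_γ, c₁ > 0, let Φ : ℝ^N → [0, M] satisfy |Φ(x) − Φ(y)| ≤ c_γ |x − y|^γ for all x, y ∈ ℝ^N, and vanish outside a bounded set Ω ⊂ ℝ^N. Let K : ℝ^N × ℝ^N → [0,∞) be measurable with K(x,y) ≤ c₁ |x−y|^{−(N+2s)} for a.e. x, y. Then there exists A > 0, depending only on N, s, γ, σ, M, c_γ and c₁, such that for every x ∈ ℝ^N one has ∫_{ℝ^N} |Φ(x)^σ − Φ(y)^σ| K(x,y) dy ≤ A. -/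
open MeasureTheory Metric

lemma my_rpow_add_le {p : ℝ} (a b : ℝ) (ha : 0 ≤ a) (hb : 0 ≤ b) (hp : 0 ≤ p) (hp1 : p ≤ 1) :
    (a + b) ^ p ≤ a ^ p + b ^ p := by
  have h := NNReal.rpow_add_le_add_rpow a.toNNReal b.toNNReal hp hp1
  have h' := NNReal.coe_le_coe.2 h
  simpa [NNReal.coe_rpow, Real.coe_toNNReal a ha, Real.coe_toNNReal b hb,
    Real.toNNReal_add ha hb] using h'

lemma my_abs_rpow_sub_rpow_le {σ : ℝ} (hσ0 : 0 ≤ σ) (hσ1 : σ ≤ 1) :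
    ∀ a b : ℝ, 0 ≤ a → 0 ≤ b → |a ^ σ - b ^ σ| ≤ |a - b| ^ σ := by
  have key : ∀ a b : ℝ, 0 ≤ a → 0 ≤ b → b ≤ a → |a ^ σ - b ^ σ| ≤ |a - b| ^ σ := by
    intro a b ha hb hba
    have h1 : a ^ σ ≤ b ^ σ + (a - b) ^ σ := by
      have := my_rpow_add_le b (a - b) hb (by linarith) hσ0 hσ1
      simpa using this
    have h2 : b ^ σ ≤ a ^ σ := Real.rpow_le_rpow hb hba hσ0
    rw [abs_of_nonneg (by linarith), abs_of_nonneg (by linarith)]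
    linarith
  intro a b ha hb
  rcases le_total b a with h | h
  · exact key a b ha hb h
  · have := key b a hb ha h
    rwa [abs_sub_comm (b ^ σ) (a ^ σ), abs_sub_comm b a] at this

lemma my_ball_int {N : ℕ} (hN : 1 ≤ N) {b : ℝ} (hb : -(N : ℝ) < b) :
    IntegrableOn (fun z : EuclideanSpace ℝ (Fin N) ↦ ‖z‖ ^ b) (ball 0 1) volume := by
  have hmeas : Measurable fun z : EuclideanSpace ℝ (Fin N) ↦ ‖z‖ ^ b := by fun_prop
  have hnonneg : ∀ z : EuclideanSpace ℝ (Fin N), 0 ≤ ‖z‖ ^ b := fun z ↦ Real.rpow_nonneg (norm_nonneg z) b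
  rcases le_or_gt 0 b with h0 | h0
  · -- bounded case
    have hc : IntegrableOn (fun _ : EuclideanSpace ℝ (Fin N) ↦ (1 : ℝ)) (ball 0 1) volume :=
      integrableOn_const measure_ball_lt_top.ne
    refine hc.mono' hmeas.aestronglyMeasurable ?_
    filter_upwards [ae_restrict_mem measurableSet_ball] with z hz
    rw [Real.norm_of_nonneg (hnonneg z)]
    exact Real.rpow_le_one (norm_nonneg z) (le_of_lt (mem_ball_zero_iff.1 hz)) h0
  · haveI : Inhabited (Fin N) := ⟨⟨0, hN⟩⟩
    haveI : Nontrivial (EuclideanSpace ℝ (Fin N)) := inferInstance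
    constructor
    · exact hmeas.aestronglyMeasurable
    have hae : 0 ≤ᵐ[volume.restrict (ball (0:EuclideanSpace ℝ (Fin N)) 1)]
        fun z ↦ ‖z‖ ^ b := Filter.Eventually.of_forall hnonneg
    rw [hasFiniteIntegral_iff_ofReal hae]
    set E := EuclideanSpace ℝ (Fin N)
    set A : ℕ → Set E := fun k ↦ ball 0 (2⁻¹ ^ k) \ ball 0 (2⁻¹ ^ (k + 1)) with hA
    have hcover : ball (0 : E) 1 ⊆ {0} ∪ ⋃ k, A k := by
      intro z hz
      rcases eq_or_ne z 0 with rfl | hz0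
      · exact Or.inl rfl
      right
      have hzpos : 0 < ‖z‖ := norm_pos_iff.2 hz0
      have hz1 : ‖z‖ < 1 := mem_ball_zero_iff.1 hz
      have hex : ∃ k : ℕ, (2⁻¹ : ℝ) ^ (k + 1) ≤ ‖z‖ := by
        obtain ⟨k, hk⟩ := exists_pow_lt_of_lt_one hzpos (by norm_num : (2⁻¹ : ℝ) < 1)
        exact ⟨k, le_of_lt (lt_of_le_of_lt (pow_le_pow_of_le_one (by norm_num) (by norm_num)
          (Nat.le_succ k)) hk)⟩
      classical
      have h1 : (2⁻¹ : ℝ) ^ (Nat.find hex + 1) ≤ ‖z‖ := Nat.find_spec hex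
      have h2 : ‖z‖ < (2⁻¹ : ℝ) ^ (Nat.find hex) := by
        rcases Nat.eq_zero_or_pos (Nat.find hex) with h | h
        · rw [h]; simpa using hz1
        · have hmin := Nat.find_min hex (Nat.sub_lt h one_pos)
          push_neg at hmin
          have heq : Nat.find hex - 1 + 1 = Nat.find hex := Nat.succ_pred_eq_of_pos h
          rwa [heq] at hmin
      exact Set.mem_iUnion.2 ⟨Nat.find hex, mem_ball_zero_iff.2 h2,
        fun hmem ↦ absurd (mem_ball_zero_iff.1 hmem) (not_lt.2 h1)⟩
    have hbN : 0 < b + N := by linarith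
    set q : ℝ := (2⁻¹ : ℝ) ^ (b + N) with hq
    have hq0 : 0 < q := Real.rpow_pos_of_pos (by norm_num) _
    have hq1 : q < 1 := Real.rpow_lt_one (by norm_num) (by norm_num) hbN
    have key : ∀ k : ℕ, (∫⁻ z in A k, ENNReal.ofReal (‖z‖ ^ b) ∂volume)
        ≤ (ENNReal.ofReal ((2⁻¹ : ℝ) ^ b) * volume (ball (0 : E) 1)) * (ENNReal.ofReal q) ^ k := by
      intro k
      have hrk : (0 : ℝ) < (2⁻¹ : ℝ) ^ (k + 1) := by positivity
      have hb1 : ∫⁻ z in A k, ENNReal.ofReal (‖z‖ ^ b) ∂volume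
          ≤ ∫⁻ _ in A k, ENNReal.ofReal (((2⁻¹ : ℝ) ^ (k + 1)) ^ b) ∂volume := by
        apply setLIntegral_mono (by fun_prop)
        intro z hz
        apply ENNReal.ofReal_le_ofReal
        exact Real.rpow_le_rpow_of_nonpos hrk
          (le_of_not_gt fun h ↦ hz.2 (mem_ball_zero_iff.2 h)) h0.le
      have hb2 : (∫⁻ _ in A k, ENNReal.ofReal (((2⁻¹ : ℝ) ^ (k + 1)) ^ b) ∂volume)
          = ENNReal.ofReal (((2⁻¹ : ℝ) ^ (k + 1)) ^ b) * volume (A k) :=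
        setLIntegral_const _ _
      have hb3 : volume (A k) ≤ ENNReal.ofReal (((2⁻¹:ℝ) ^ k) ^ N) * volume (ball (0 : E) 1) := by
        calc volume (A k) ≤ volume (ball (0 : E) (2⁻¹ ^ k)) := measure_mono Set.diff_subset
          _ = ENNReal.ofReal (((2⁻¹:ℝ) ^ k) ^ Module.finrank ℝ E) * volume (ball (0 : E) 1) :=
              Measure.addHaar_ball volume 0 (by positivity)
          _ = ENNReal.ofReal (((2⁻¹:ℝ) ^ k) ^ N) * volume (ball (0 : E) 1) := by
              rw [finrank_euclideanSpace_fin]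
      have hcoef : ((2⁻¹ : ℝ) ^ (k + 1)) ^ b * ((2⁻¹:ℝ) ^ k) ^ N = (2⁻¹ : ℝ) ^ b * q ^ k := by
        rw [← Real.rpow_natCast (2⁻¹ : ℝ) (k + 1), ← Real.rpow_natCast (2⁻¹ : ℝ) k,
          ← Real.rpow_natCast (((2⁻¹:ℝ)) ^ ((k:ℝ))) N,
          ← Real.rpow_mul (by norm_num), ← Real.rpow_mul (by norm_num),
          hq, ← Real.rpow_natCast ((2⁻¹:ℝ) ^ (b + (N:ℝ))) k, ← Real.rpow_mul (by norm_num),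
          ← Real.rpow_add (by norm_num : (0:ℝ) < 2⁻¹), ← Real.rpow_add (by norm_num : (0:ℝ) < 2⁻¹)]
        congr 1
        push_cast
        ring
      calc (∫⁻ z in A k, ENNReal.ofReal (‖z‖ ^ b) ∂volume)
          ≤ ENNReal.ofReal (((2⁻¹ : ℝ) ^ (k + 1)) ^ b) * volume (A k) := by rw [← hb2]; exact hb1
        _ ≤ ENNReal.ofReal (((2⁻¹ : ℝ) ^ (k + 1)) ^ b) *
            (ENNReal.ofReal (((2⁻¹:ℝ) ^ k) ^ N) * volume (ball (0 : E) 1)) :=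
            mul_le_mul_right hb3 _
        _ = ENNReal.ofReal (((2⁻¹ : ℝ) ^ (k + 1)) ^ b * ((2⁻¹:ℝ) ^ k) ^ N) *
            volume (ball (0 : E) 1) := by
            rw [ENNReal.ofReal_mul (by positivity)]; ring
        _ = (ENNReal.ofReal ((2⁻¹ : ℝ) ^ b) * volume (ball (0 : E) 1)) * (ENNReal.ofReal q) ^ k := by
            rw [hcoef, ENNReal.ofReal_mul (by positivity), ← ENNReal.ofReal_pow hq0.le]
            ring
    calc ∫⁻ z in ball (0 : E) 1, ENNReal.ofReal (‖z‖ ^ b) ∂volume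
        ≤ ∫⁻ z in ({0} ∪ ⋃ k, A k : Set E), ENNReal.ofReal (‖z‖ ^ b) ∂volume :=
          lintegral_mono_set hcover
      _ ≤ (∫⁻ z in ({0} : Set E), ENNReal.ofReal (‖z‖ ^ b) ∂volume)
          + ∫⁻ z in ⋃ k, A k, ENNReal.ofReal (‖z‖ ^ b) ∂volume := lintegral_union_le _ _ _
      _ ≤ 0 + ∑' k, ∫⁻ z in A k, ENNReal.ofReal (‖z‖ ^ b) ∂volume := by
          gcongr
          · rw [lintegral_singleton]
            simp [Real.zero_rpow (ne_of_lt h0)]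
          · exact lintegral_iUnion_le _ _
      _ ≤ 0 + ∑' k, (ENNReal.ofReal ((2⁻¹ : ℝ) ^ b) * volume (ball (0 : E) 1))
            * (ENNReal.ofReal q) ^ k := by gcongr with k; exact key k
      _ = (ENNReal.ofReal ((2⁻¹ : ℝ) ^ b) * volume (ball (0 : E) 1))
            * (1 - ENNReal.ofReal q)⁻¹ := by
          rw [zero_add, ENNReal.tsum_mul_left, ENNReal.tsum_geometric]
      _ < ⊤ := by
          apply ENNReal.mul_lt_top (ENNReal.mul_lt_top ENNReal.ofReal_lt_top measure_ball_lt_top)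
          rw [ENNReal.inv_lt_top]
          rw [tsub_pos_iff_lt]
          exact ENNReal.ofReal_lt_one.2 hq1

/-- Uniform bound on the nonlocal operator applied to a fractional power
of a Hölder function. -/
theorem stmt8 (N : ℕ) (hN : 1 ≤ N) (s γ σ : ℝ)
    (hs : s ∈ Set.Ioo (0 : ℝ) 1) (hγ : γ ∈ Set.Ioc (0 : ℝ) 1)
    (hσ : σ ∈ Set.Ioc (0 : ℝ) 1) (hγσ : 2 * s < γ * σ)
    (M cγ c₁ : ℝ) (hM : 0 < M) (hcγ : 0 < cγ) (hc₁ : 0 < c₁)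
    (Ω : Set (EuclideanSpace ℝ (Fin N))) (hΩbdd : Bornology.IsBounded Ω)
    (Φ : EuclideanSpace ℝ (Fin N) → ℝ)
    (hΦrange : ∀ x, Φ x ∈ Set.Icc (0 : ℝ) M)
    (hΦholder : ∀ x y, |Φ x - Φ y| ≤ cγ * ‖x - y‖ ^ γ)
    (hΦzero : ∀ x ∉ Ω, Φ x = 0)
    (K : EuclideanSpace ℝ (Fin N) → EuclideanSpace ℝ (Fin N) → ℝ)
    (hKmeas : Measurable (Function.uncurry K)) (hKnn : ∀ x y, 0 ≤ K x y)
    (hKup : ∀ x, ∀ᵐ y ∂volume, K x y ≤ c₁ * ‖x - y‖ ^ (-((N : ℝ) + 2 * s))) :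
    ∃ A : ℝ, 0 < A ∧
      ∀ x, ∫ y, |Φ x ^ σ - Φ y ^ σ| * K x y ≤ A := by
  obtain ⟨hs0, hs1⟩ := hs
  obtain ⟨hγ0, hγ1⟩ := hγ
  obtain ⟨hσ0, hσ1⟩ := hσ
  set r : ℝ := (N : ℝ) + 2 * s with hr
  set p : ℝ := γ * σ with hp
  have hNpos : (0 : ℝ) < N := by exact_mod_cast Nat.lt_of_lt_of_le Nat.zero_lt_one hN
  have hr_pos : 0 < r := by positivity
  have hp_pos : 0 < p := mul_pos hγ0 hσ0
  have hp1 : p ≤ 1 := mul_le_one₀ hγ1 hσ0.le hσ1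
  -- the two integrable pieces
  have hint1 : IntegrableOn (fun z : EuclideanSpace ℝ (Fin N) ↦ ‖z‖ ^ (p - r))
      (ball 0 1) volume := my_ball_int hN (by rw [hr]; linarith)
  have hint2 : Integrable (fun z : EuclideanSpace ℝ (Fin N) ↦ (1 + ‖z‖) ^ (-r)) volume := by
    apply integrable_one_add_norm
    rw [finrank_euclideanSpace_fin]
    linarith
  set C₁ : ℝ := cγ ^ σ * c₁ with hC₁
  set C₂ : ℝ := M ^ σ * c₁ * 2 ^ r with hC₂
  have hC₁0 : 0 ≤ C₁ := by positivity
  have hC₂0 : 0 ≤ C₂ := by positivity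
  set g : EuclideanSpace ℝ (Fin N) → ℝ := fun z ↦
    C₁ * (ball (0 : EuclideanSpace ℝ (Fin N)) 1).indicator (fun z ↦ ‖z‖ ^ (p - r)) z
      + C₂ * (1 + ‖z‖) ^ (-r) with hg
  have hg_nonneg : ∀ z, 0 ≤ g z := by
    intro z
    apply add_nonneg
    · apply mul_nonneg hC₁0
      apply Set.indicator_nonneg
      intro z _
      exact Real.rpow_nonneg (norm_nonneg z) _
    · exact mul_nonneg hC₂0 (Real.rpow_nonneg (by positivity) _)
  have hg_int : Integrable g volume :=
    ((hint1.integrable_indicator measurableSet_ball).const_mul C₁).add (hint2.const_mul C₂)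
  refine ⟨(∫ z, g z) + 1, by
    have : 0 ≤ ∫ z, g z := integral_nonneg hg_nonneg
    linarith, ?_⟩
  intro x
  have hdom : ∀ᵐ y ∂volume, |Φ x ^ σ - Φ y ^ σ| * K x y ≤ g (y - x) := by
    filter_upwards [hKup x] with y hKy
    rcases eq_or_ne y x with rfl | hyx
    · simpa using hg_nonneg (y - y)
    have hd0 : (0 : ℝ) < ‖y - x‖ := by
      rw [norm_pos_iff]
      exact sub_ne_zero_of_ne hyx
    have hK' : K x y ≤ c₁ * ‖y - x‖ ^ (-r) := by rwa [norm_sub_rev y x]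
    have habs1 : |Φ x ^ σ - Φ y ^ σ| ≤ cγ ^ σ * ‖y - x‖ ^ p := by
      calc |Φ x ^ σ - Φ y ^ σ| ≤ |Φ x - Φ y| ^ σ :=
            my_abs_rpow_sub_rpow_le hσ0.le hσ1 _ _ (hΦrange x).1 (hΦrange y).1
        _ ≤ (cγ * ‖x - y‖ ^ γ) ^ σ :=
            Real.rpow_le_rpow (abs_nonneg _) (hΦholder x y) hσ0.le
        _ = cγ ^ σ * ‖y - x‖ ^ p := by
            rw [Real.mul_rpow hcγ.le (Real.rpow_nonneg (norm_nonneg _) _),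
              ← Real.rpow_mul (norm_nonneg _), norm_sub_rev x y]
    have habs2 : |Φ x ^ σ - Φ y ^ σ| ≤ M ^ σ := by
      have h1 : Φ x ^ σ ≤ M ^ σ := Real.rpow_le_rpow (hΦrange x).1 (hΦrange x).2 hσ0.le
      have h2 : Φ y ^ σ ≤ M ^ σ := Real.rpow_le_rpow (hΦrange y).1 (hΦrange y).2 hσ0.le
      have h3 : 0 ≤ Φ x ^ σ := Real.rpow_nonneg (hΦrange x).1 _
      have h4 : 0 ≤ Φ y ^ σ := Real.rpow_nonneg (hΦrange y).1 _
      rw [abs_le]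
      constructor <;> linarith
    have hKnonneg := hKnn x y
    by_cases hd1 : ‖y - x‖ < 1
    · have hind : (ball (0 : EuclideanSpace ℝ (Fin N)) 1).indicator
          (fun z ↦ ‖z‖ ^ (p - r)) (y - x) = ‖y - x‖ ^ (p - r) :=
        Set.indicator_of_mem (mem_ball_zero_iff.2 hd1) _
      have : |Φ x ^ σ - Φ y ^ σ| * K x y ≤ (cγ ^ σ * ‖y - x‖ ^ p) * (c₁ * ‖y - x‖ ^ (-r)) :=
        mul_le_mul habs1 hK' hKnonneg (by positivity)
      have heq : (cγ ^ σ * ‖y - x‖ ^ p) * (c₁ * ‖y - x‖ ^ (-r)) = C₁ * ‖y - x‖ ^ (p - r) := by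
        rw [hC₁, show p - r = p + (-r) by ring, Real.rpow_add hd0]
        ring
      rw [hg]
      dsimp only
      rw [hind]
      have hpos2 : 0 ≤ C₂ * (1 + ‖y - x‖) ^ (-r) :=
        mul_nonneg hC₂0 (Real.rpow_nonneg (by positivity) _)
      linarith [this, heq ▸ this]
    · push_neg at hd1
      have hind : (ball (0 : EuclideanSpace ℝ (Fin N)) 1).indicator
          (fun z ↦ ‖z‖ ^ (p - r)) (y - x) = 0 :=
        Set.indicator_of_notMem (by simpa [mem_ball_zero_iff] using not_lt.2 hd1) _
      have h2d : ‖y - x‖ ^ (-r) ≤ 2 ^ r * (1 + ‖y - x‖) ^ (-r) := by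
        have h1d : (0 : ℝ) < 1 + ‖y - x‖ := by positivity
        have h2 : 1 + ‖y - x‖ ≤ 2 * ‖y - x‖ := by linarith
        have h3 : (2 * ‖y - x‖) ^ (-r) ≤ (1 + ‖y - x‖) ^ (-r) :=
          Real.rpow_le_rpow_of_nonpos h1d h2 (neg_nonpos.2 hr_pos.le)
        have h4 : (2 * ‖y - x‖) ^ (-r) = 2 ^ (-r) * ‖y - x‖ ^ (-r) :=
          Real.mul_rpow (by norm_num) hd0.le
        have h5 : (2 : ℝ) ^ r * 2 ^ (-r) = 1 := by
          rw [← Real.rpow_add (by norm_num : (0:ℝ) < 2)]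
          simp
        calc ‖y - x‖ ^ (-r) = 2 ^ r * ((2 * ‖y - x‖) ^ (-r)) := by
              rw [h4, ← mul_assoc, h5, one_mul]
          _ ≤ 2 ^ r * (1 + ‖y - x‖) ^ (-r) := by
              apply mul_le_mul_of_nonneg_left h3 (by positivity)
      calc |Φ x ^ σ - Φ y ^ σ| * K x y ≤ M ^ σ * (c₁ * ‖y - x‖ ^ (-r)) :=
            mul_le_mul habs2 hK' hKnonneg (by positivity)
        _ ≤ M ^ σ * (c₁ * (2 ^ r * (1 + ‖y - x‖) ^ (-r))) := by
            apply mul_le_mul_of_nonneg_left _ (by positivity)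
            exact mul_le_mul_of_nonneg_left h2d hc₁.le
        _ = C₂ * (1 + ‖y - x‖) ^ (-r) := by rw [hC₂]; ring
        _ ≤ g (y - x) := by
            rw [hg]
            dsimp only
            rw [hind]
            simp
  have hnn : ∀ᵐ y ∂volume, 0 ≤ |Φ x ^ σ - Φ y ^ σ| * K x y :=
    Filter.Eventually.of_forall fun y ↦ mul_nonneg (abs_nonneg _) (hKnn x y)
  calc ∫ y, |Φ x ^ σ - Φ y ^ σ| * K x y
      ≤ ∫ y, g (y - x) := integral_mono_of_nonneg hnn (hg_int.comp_sub_right x) hdom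
    _ = ∫ z, g z := integral_sub_right_eq_self g x
    _ ≤ (∫ z, g z) + 1 := by linarith
end

section
/- Lower bound on Green potentials of functions bounded below by a power of the distance: Let N ≥ 1, s ∈ (0,1) with 2s < N, γ > 0, β ≥ 0, c₀ > 0, κ > 0, and let Ω ⊂ ℝ^N be a nonempty bounded open set. Let G : Ω × Ω → [0,∞] be measurable with G(x,y) ≥ c₀ |x−y|^{−(N−2s)} min(δ(x)^γ/|x−y|^γ, 1) min(δ(y)^γ/|x−y|^γ, 1) for a.e. x, y ∈ Ω, and let w : Ω → [0,∞) be measurable with w(x) ≥ κ δ(x)^β for a.e. x ∈ Ω. Then there exists c > 0, depending only on N, s, γ, β, c₀ and κ, such that ∫_Ω G(x, x₀) w(x) dx ≥ c δ(x₀)^{β + 2s} for a.e. x₀ ∈ Ω. -/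
open MeasureTheory Metric
open scoped ENNReal

/-- Distance to the boundary of `Ω`. -/
noncomputable def bdist {N : ℕ} (Ω : Set (EuclideanSpace ℝ (Fin N)))
    (x : EuclideanSpace ℝ (Fin N)) : ℝ :=
  Metric.infDist x (frontier Ω)

/-- Lower bound on Green potentials of functions bounded below by a
power of the distance. -/
theorem stmt9 (N : ℕ) (hN : 1 ≤ N) (s γ β c₀ κ : ℝ)
    (hs : s ∈ Set.Ioo (0 : ℝ) 1) (hsN : 2 * s < (N : ℝ))
    (hγ : 0 < γ) (hβ : 0 ≤ β) (hc₀ : 0 < c₀) (hκ : 0 < κ)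
    (Ω : Set (EuclideanSpace ℝ (Fin N))) (hne : Ω.Nonempty) (hop : IsOpen Ω)
    (hbdd : Bornology.IsBounded Ω)
    (G : EuclideanSpace ℝ (Fin N) → EuclideanSpace ℝ (Fin N) → ℝ≥0∞)
    (hGmeas : Measurable (Function.uncurry G))
    (hGlow : ∀ᵐ p : EuclideanSpace ℝ (Fin N) × EuclideanSpace ℝ (Fin N)
        ∂(volume.restrict (Ω ×ˢ Ω)),
      ENNReal.ofReal (c₀ * ‖p.1 - p.2‖ ^ (-((N : ℝ) - 2 * s)) *
        min (bdist Ω p.1 ^ γ / ‖p.1 - p.2‖ ^ γ) 1 *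
        min (bdist Ω p.2 ^ γ / ‖p.1 - p.2‖ ^ γ) 1) ≤ G p.1 p.2)
    (w : EuclideanSpace ℝ (Fin N) → ℝ)
    (hwmeas : Measurable w) (hwnn : ∀ x, 0 ≤ w x)
    (hwlow : ∀ᵐ x ∂(volume.restrict Ω), κ * bdist Ω x ^ β ≤ w x) :
    ∃ c : ℝ, 0 < c ∧
      ∀ᵐ x₀ ∂(volume.restrict Ω),
        ENNReal.ofReal (c * bdist Ω x₀ ^ (β + 2 * s)) ≤
          ∫⁻ x in Ω, G x x₀ * ENNReal.ofReal (w x) := by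
  classical
  obtain ⟨hs0, hs1⟩ := hs
  haveI : Nonempty (Fin N) := Fin.pos_iff_nonempty.mp hN
  haveI : Nontrivial (EuclideanSpace ℝ (Fin N)) := inferInstance
  have hΩm : MeasurableSet Ω := hop.measurableSet
  -- transfer the product a.e. hypothesis to an iterated a.e. statement
  have hprod : (volume.restrict Ω).prod (volume.restrict Ω)
      = (volume : Measure (EuclideanSpace ℝ (Fin N) × EuclideanSpace ℝ (Fin N))).restrict
          (Ω ×ˢ Ω) := by
    rw [Measure.prod_restrict, ← Measure.volume_eq_prod]
  have hGlow2 : ∀ᵐ p : EuclideanSpace ℝ (Fin N) × EuclideanSpace ℝ (Fin N)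
      ∂((volume.restrict Ω).prod (volume.restrict Ω)),
      ENNReal.ofReal (c₀ * ‖p.1 - p.2‖ ^ (-((N : ℝ) - 2 * s)) *
        min (bdist Ω p.1 ^ γ / ‖p.1 - p.2‖ ^ γ) 1 *
        min (bdist Ω p.2 ^ γ / ‖p.1 - p.2‖ ^ γ) 1) ≤ G p.1 p.2 := by
    rw [hprod]; exact hGlow
  have hGswap : ∀ᵐ q : EuclideanSpace ℝ (Fin N) × EuclideanSpace ℝ (Fin N)
      ∂((volume.restrict Ω).prod (volume.restrict Ω)),
      ENNReal.ofReal (c₀ * ‖q.2 - q.1‖ ^ (-((N : ℝ) - 2 * s)) *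
        min (bdist Ω q.2 ^ γ / ‖q.2 - q.1‖ ^ γ) 1 *
        min (bdist Ω q.1 ^ γ / ‖q.2 - q.1‖ ^ γ) 1) ≤ G q.2 q.1 := by
    have h := (Measure.measurePreserving_swap (μ := volume.restrict Ω) (ν := volume.restrict Ω)).quasiMeasurePreserving.ae hGlow2
    simpa using h
  have hG' := Measure.ae_ae_of_ae_prod hGswap
  -- constants
  set V : ℝ := (volume (ball (0 : EuclideanSpace ℝ (Fin N)) 1)).toReal with hV_def
  have hVpos : 0 < V :=
    ENNReal.toReal_pos (measure_ball_pos _ _ one_pos).ne' measure_ball_lt_top.ne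
  have hhalf : (1/2:ℝ)^N < 1 := by
    calc (1/2:ℝ)^N ≤ (1/2:ℝ)^1 := pow_le_pow_of_le_one (by norm_num) (by norm_num) hN
    _ < 1 := by norm_num
  have hcpos : (0:ℝ) < c₀ * κ * (1 - (1/2:ℝ)^N) * V * (1/2:ℝ) ^ (β + 2*s) := by
    have h1 : (0:ℝ) < 1 - (1/2:ℝ)^N := by linarith
    positivity
  refine ⟨c₀ * κ * (1 - (1/2:ℝ)^N) * V * (1/2:ℝ) ^ (β + 2*s), hcpos, ?_⟩
  have hΩneuniv : Ω ≠ Set.univ := fun h =>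
    NormedSpace.unbounded_univ ℝ (EuclideanSpace ℝ (Fin N)) (h ▸ hbdd)
  filter_upwards [hG', ae_restrict_mem hΩm] with x₀ hGx₀ hx₀
  set d := bdist Ω x₀ with hd_def
  have hfr : x₀ ∉ frontier Ω := by
    rw [hop.frontier_eq]; exact fun h => h.2 hx₀
  have hfrne : (frontier Ω).Nonempty := by
    rcases exists_mem_frontier_infDist_compl_eq_dist hx₀ hΩneuniv with ⟨y, hy, _⟩
    exact ⟨y, hy⟩
  have hd : 0 < d := (isClosed_frontier.notMem_iff_infDist_pos hfrne).mp hfr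
  have hdle : d ≤ infDist x₀ Ωᶜ := by
    rcases exists_mem_frontier_infDist_compl_eq_dist hx₀ hΩneuniv with ⟨y, hy, hyd⟩
    rw [hyd]; exact infDist_le_dist_of_mem hy
  have hball : closedBall x₀ (d/2) ⊆ Ω := fun z hz => ball_infDist_compl_subset
    (mem_ball.mpr (lt_of_le_of_lt (mem_closedBall.mp hz) (by linarith)))
  set A := closedBall x₀ (d/2) \ ball x₀ (d/4) with hA_def
  have hAΩ : A ⊆ Ω := Set.diff_subset.trans hball
  -- pointwise lower bound on the annulus
  have hkey : ∀ᵐ x ∂(volume.restrict A),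
      ENNReal.ofReal (c₀ * (d/2) ^ (-((N:ℝ) - 2*s)) * (κ * (d/2)^β))
        ≤ G x x₀ * ENNReal.ofReal (w x) := by
    filter_upwards [ae_restrict_of_ae_restrict_of_subset hAΩ hGx₀,
      ae_restrict_of_ae_restrict_of_subset hAΩ hwlow,
      ae_restrict_mem (measurableSet_closedBall.diff measurableSet_ball)] with x hGx hwx hxA
    obtain ⟨hx1, hx2⟩ := hxA
    rw [mem_closedBall] at hx1
    rw [mem_ball, not_lt] at hx2
    have hn1 : ‖x - x₀‖ ≤ d/2 := by rwa [← dist_eq_norm]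
    have hn2 : d/4 ≤ ‖x - x₀‖ := by rwa [← dist_eq_norm]
    have hnpos : 0 < ‖x - x₀‖ := lt_of_lt_of_le (by linarith) hn2
    have hbx : d/2 ≤ bdist Ω x := by
      have h : infDist x₀ (frontier Ω) ≤ infDist x (frontier Ω) + dist x₀ x :=
        infDist_le_infDist_add_dist
      have h2 : dist x₀ x ≤ d/2 := by rw [dist_comm]; exact hx1
      simp only [bdist] at *
      linarith
    have hmin1 : min (bdist Ω x ^ γ / ‖x - x₀‖ ^ γ) 1 = 1 := by
      apply min_eq_right
      rw [le_div_iff₀ (Real.rpow_pos_of_pos hnpos γ), one_mul]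
      exact Real.rpow_le_rpow (norm_nonneg _) (hn1.trans hbx) hγ.le
    have hmin2 : min (bdist Ω x₀ ^ γ / ‖x - x₀‖ ^ γ) 1 = 1 := by
      apply min_eq_right
      rw [le_div_iff₀ (Real.rpow_pos_of_pos hnpos γ), one_mul]
      exact Real.rpow_le_rpow (norm_nonneg _) (by linarith) hγ.le
    rw [hmin1, hmin2, mul_one, mul_one] at hGx
    have hA1 : c₀ * (d/2) ^ (-((N:ℝ) - 2*s)) ≤ c₀ * ‖x - x₀‖ ^ (-((N:ℝ) - 2*s)) := by
      apply mul_le_mul_of_nonneg_left _ hc₀.le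
      exact Real.rpow_le_rpow_of_nonpos hnpos hn1 (by linarith)
    have hA2 : κ * (d/2)^β ≤ w x := by
      refine le_trans ?_ hwx
      exact mul_le_mul_of_nonneg_left (Real.rpow_le_rpow (by linarith) hbx hβ) hκ.le
    calc ENNReal.ofReal (c₀ * (d/2) ^ (-((N:ℝ) - 2*s)) * (κ * (d/2)^β))
        = ENNReal.ofReal (c₀ * (d/2) ^ (-((N:ℝ) - 2*s)))
            * ENNReal.ofReal (κ * (d/2)^β) := by
          rw [← ENNReal.ofReal_mul (by positivity)]
      _ ≤ G x x₀ * ENNReal.ofReal (w x) :=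
          mul_le_mul' (le_trans (ENNReal.ofReal_le_ofReal hA1) hGx)
            (ENNReal.ofReal_le_ofReal hA2)
  -- volume of the annulus
  have hballsub : ball x₀ (d/4) ⊆ closedBall x₀ (d/2) :=
    (ball_subset_ball (by linarith)).trans ball_subset_closedBall
  have hfinrank : Module.finrank ℝ (EuclideanSpace ℝ (Fin N)) = N := finrank_euclideanSpace_fin
  have hpowle : ((d/4:ℝ))^N ≤ ((d/2:ℝ))^N := by
    apply pow_le_pow_left₀ (by positivity) (by linarith)
  have hvolA : ENNReal.ofReal (((d/2:ℝ))^N - ((d/4:ℝ))^N) * ENNReal.ofReal V ≤ volume A := by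
    rw [hA_def, measure_diff hballsub measurableSet_ball.nullMeasurableSet
        measure_ball_lt_top.ne,
      Measure.addHaar_closedBall _ _ (by positivity : (0:ℝ) ≤ d/2),
      Measure.addHaar_ball _ _ (by positivity : (0:ℝ) ≤ d/4), hfinrank,
      ← ENNReal.sub_mul (fun _ _ => measure_ball_lt_top.ne),
      ← ENNReal.ofReal_sub _ (by positivity)]
    exact mul_le_mul' le_rfl ENNReal.ofReal_toReal_le
  -- real arithmetic identity
  have hd2 : (0:ℝ) < d/2 := by positivity
  have hreal : c₀ * κ * (1 - (1/2:ℝ)^N) * V * (1/2:ℝ) ^ (β + 2*s) * d ^ (β + 2*s)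
      = (c₀ * (d/2) ^ (-((N:ℝ) - 2*s)) * (κ * (d/2)^β))
        * ((((d/2:ℝ))^N - ((d/4:ℝ))^N) * V) := by
    have e1 : ((d/2:ℝ))^N - ((d/4:ℝ))^N = ((d/2:ℝ))^N * (1 - (1/2:ℝ)^N) := by
      rw [show (d/4:ℝ) = (d/2)*(1/2) by ring, mul_pow]; ring
    have e2 : ((d/2:ℝ))^N = (d/2) ^ (N:ℝ) := (Real.rpow_natCast _ N).symm
    have e3 : (d/2:ℝ) ^ (-((N:ℝ) - 2*s)) * (d/2)^β * (d/2)^(N:ℝ) = (d/2) ^ (β + 2*s) := by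
      rw [← Real.rpow_add hd2, ← Real.rpow_add hd2]
      congr 1; ring
    have e4 : (d/2:ℝ) ^ (β + 2*s) = (1/2:ℝ) ^ (β + 2*s) * d ^ (β + 2*s) := by
      rw [show (d/2:ℝ) = (1/2)*d by ring, Real.mul_rpow (by norm_num) hd.le]
    calc c₀ * κ * (1 - (1/2:ℝ)^N) * V * (1/2:ℝ) ^ (β + 2*s) * d ^ (β + 2*s)
        = c₀ * κ * (1 - (1/2:ℝ)^N) * V * ((d/2:ℝ) ^ (β + 2*s)) := by rw [e4]; ring
      _ = c₀ * κ * (1 - (1/2:ℝ)^N) * V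
            * ((d/2:ℝ) ^ (-((N:ℝ) - 2*s)) * (d/2)^β * (d/2)^(N:ℝ)) := by rw [e3]
      _ = (c₀ * (d/2) ^ (-((N:ℝ) - 2*s)) * (κ * (d/2)^β))
            * ((((d/2:ℝ))^N - ((d/4:ℝ))^N) * V) := by
          rw [e1, e2]; ring
  -- final chain
  calc ENNReal.ofReal (c₀ * κ * (1 - (1/2:ℝ)^N) * V * (1/2:ℝ) ^ (β + 2*s) * d ^ (β + 2*s))
      = ENNReal.ofReal ((c₀ * (d/2) ^ (-((N:ℝ) - 2*s)) * (κ * (d/2)^β))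
          * ((((d/2:ℝ))^N - ((d/4:ℝ))^N) * V)) := by rw [← hreal]
    _ = ENNReal.ofReal (c₀ * (d/2) ^ (-((N:ℝ) - 2*s)) * (κ * (d/2)^β))
          * (ENNReal.ofReal (((d/2:ℝ))^N - ((d/4:ℝ))^N) * ENNReal.ofReal V) := by
        rw [ENNReal.ofReal_mul (by positivity), ENNReal.ofReal_mul (sub_nonneg.mpr hpowle)]
    _ ≤ ENNReal.ofReal (c₀ * (d/2) ^ (-((N:ℝ) - 2*s)) * (κ * (d/2)^β)) * volume A :=
        mul_le_mul' le_rfl hvolA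
    _ = ∫⁻ _ in A, ENNReal.ofReal (c₀ * (d/2) ^ (-((N:ℝ) - 2*s)) * (κ * (d/2)^β)) :=
        (setLIntegral_const _ _).symm
    _ ≤ ∫⁻ x in A, G x x₀ * ENNReal.ofReal (w x) := lintegral_mono_ae hkey
    _ ≤ ∫⁻ x in Ω, G x x₀ * ENNReal.ofReal (w x) := lintegral_mono_set hAΩ
end

section
/- Obstruction to lower bounds (anomalous boundary behavior): Let N ≥ 1, s ∈ (0,1) with 2s < N, γ ∈ (0,1], c₀ > 0, and let Ω ⊂ ℝ^N be a nonempty bounded open set. Let G : Ω × Ω → [0,∞] be measurable with G(x,y) ≥ c₀ |x−y|^{−(N−2s)} min(δ(x)^γ/|x−y|^γ, 1) min(δ(y)^γ/|x−y|^γ, 1) for a.e. x, y ∈ Ω. Suppose there exist constants κ, C₀, α > 0 and a measurable w : Ω → [0,∞) such that w(x) ≥ κ δ(x)^{γα} for a.e. x ∈ Ω and ∫_Ω G(x, x₀) w(x) dx ≤ C₀ δ(x₀)^γ for a.e. x₀ ∈ Ω. Then α ≥ 1 − 2s/γ. -/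
open MeasureTheory Metric
open scoped ENNReal

set_option maxHeartbeats 2000000 in
/-- Obstruction to lower bounds (anomalous boundary behavior). -/
theorem stmt10 (N : ℕ) (hN : 1 ≤ N) (s γ c₀ : ℝ)
    (hs : s ∈ Set.Ioo (0 : ℝ) 1) (hsN : 2 * s < (N : ℝ))
    (hγ : γ ∈ Set.Ioc (0 : ℝ) 1) (hc₀ : 0 < c₀)
    (Ω : Set (EuclideanSpace ℝ (Fin N))) (hne : Ω.Nonempty) (hop : IsOpen Ω)
    (hbdd : Bornology.IsBounded Ω)
    (G : EuclideanSpace ℝ (Fin N) → EuclideanSpace ℝ (Fin N) → ℝ≥0∞)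
    (hGmeas : Measurable (Function.uncurry G))
    (hGlow : ∀ᵐ p : EuclideanSpace ℝ (Fin N) × EuclideanSpace ℝ (Fin N)
        ∂(volume.restrict (Ω ×ˢ Ω)),
      ENNReal.ofReal (c₀ * ‖p.1 - p.2‖ ^ (-((N : ℝ) - 2 * s)) *
        min (bdist Ω p.1 ^ γ / ‖p.1 - p.2‖ ^ γ) 1 *
        min (bdist Ω p.2 ^ γ / ‖p.1 - p.2‖ ^ γ) 1) ≤ G p.1 p.2)
    (κ C₀ α : ℝ) (hκ : 0 < κ) (hC₀ : 0 < C₀) (hα : 0 < α)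
    (w : EuclideanSpace ℝ (Fin N) → ℝ)
    (hwmeas : Measurable w) (hwnn : ∀ x, 0 ≤ w x)
    (hwlow : ∀ᵐ x ∂(volume.restrict Ω), κ * bdist Ω x ^ (γ * α) ≤ w x)
    (hup : ∀ᵐ x₀ ∂(volume.restrict Ω),
      (∫⁻ x in Ω, G x x₀ * ENNReal.ofReal (w x)) ≤
        ENNReal.ofReal (C₀ * bdist Ω x₀ ^ γ)) :
    1 - 2 * s / γ ≤ α := by
  obtain ⟨hs0, hs1⟩ := hs
  obtain ⟨hγ0, hγ1⟩ := hγ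
  by_contra hcon
  push_neg at hcon
  -- basic exponent facts
  set β : ℝ := 2 * s + γ * α with hβdef
  have hβ : 0 < β := by positivity
  have heγ : β < γ := by
    have h1 : γ * α < γ * (1 - 2 * s / γ) := mul_lt_mul_of_pos_left hcon hγ0
    have h2 : γ * (1 - 2 * s / γ) = γ - 2 * s := by
      field_simp
    rw [h2] at h1
    simp only [hβdef]; linarith
  set e : ℝ := γ - β with hedef
  have he : 0 < e := by simp only [hedef]; linarith
  -- the space
  haveI : Nonempty (Fin N) := ⟨⟨0, hN⟩⟩
  haveI : Nontrivial (EuclideanSpace ℝ (Fin N)) := by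
    exact nontrivial_of_ne (EuclideanSpace.single (⟨0, hN⟩ : Fin N) (1:ℝ)) 0
      (by intro h; have := congrArg (fun v => v ⟨0, hN⟩) h; simp at this)
  have hΩne_univ : Ω ≠ Set.univ := by
    intro h
    exact NormedSpace.unbounded_univ ℝ (EuclideanSpace ℝ (Fin N)) (h ▸ hbdd)
  have hfr : (frontier Ω).Nonempty := nonempty_frontier_iff.mpr ⟨hne, hΩne_univ⟩
  -- positivity of bdist on Ω
  have hbd_pos : ∀ x ∈ Ω, 0 < bdist Ω x := by
    intro x hx
    have hxf : x ∉ frontier Ω := by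
      rw [hop.frontier_eq]
      exact fun h => h.2 hx
    exact (isClosed_frontier.notMem_iff_infDist_pos hfr).mp hxf
  -- interior balls
  have hball : ∀ x ∈ Ω, ball x (bdist Ω x) ⊆ Ω := by
    intro x hx
    obtain ⟨y, hy, hxy⟩ := exists_mem_frontier_infDist_compl_eq_dist hx hΩne_univ
    have h1 : bdist Ω x ≤ infDist x Ωᶜ := by
      rw [hxy]; exact infDist_le_dist_of_mem hy
    exact (ball_subset_ball h1).trans ball_infDist_compl_subset
  -- the unit ball volume
  set V : ℝ≥0∞ := volume (ball (0 : EuclideanSpace ℝ (Fin N)) 1) with hVdef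
  have hV0 : V ≠ 0 := (measure_ball_pos volume _ one_pos).ne'
  have hVtop : V ≠ ⊤ := measure_ball_lt_top.ne
  set Vt : ℝ := V.toReal with hVtdef
  have hVt : 0 < Vt := ENNReal.toReal_pos hV0 hVtop
  -- the threshold
  set M : ℝ := c₀ * κ * Vt / (2 : ℝ) ^ β / C₀ with hMdef
  have hM : 0 < M := by
    have h2 : (0:ℝ) < (2:ℝ) ^ β := Real.rpow_pos_of_pos two_pos β
    positivity
  set ε : ℝ := M ^ e⁻¹ with hεdef
  have hε : 0 < ε := Real.rpow_pos_of_pos hM _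
  -- measurability of the Green lower bound event
  have m1 : MeasurableSet {p : EuclideanSpace ℝ (Fin N) × EuclideanSpace ℝ (Fin N) |
      ENNReal.ofReal (c₀ * ‖p.1 - p.2‖ ^ (-((N : ℝ) - 2 * s)) *
        min (bdist Ω p.1 ^ γ / ‖p.1 - p.2‖ ^ γ) 1 *
        min (bdist Ω p.2 ^ γ / ‖p.1 - p.2‖ ^ γ) 1) ≤ G p.1 p.2} := by
    apply measurableSet_le
    · apply ENNReal.measurable_ofReal.comp
      have hnorm : Measurable fun p : EuclideanSpace ℝ (Fin N) × EuclideanSpace ℝ (Fin N) =>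
          ‖p.1 - p.2‖ := (continuous_fst.sub continuous_snd).norm.measurable
      have hbd1 : Measurable fun p : EuclideanSpace ℝ (Fin N) × EuclideanSpace ℝ (Fin N) =>
          bdist Ω p.1 := ((continuous_infDist_pt (frontier Ω)).comp continuous_fst).measurable
      have hbd2 : Measurable fun p : EuclideanSpace ℝ (Fin N) × EuclideanSpace ℝ (Fin N) =>
          bdist Ω p.2 := ((continuous_infDist_pt (frontier Ω)).comp continuous_snd).measurable
      exact (((measurable_const.mul (hnorm.pow measurable_const)).mul
        (((hbd1.pow measurable_const).div (hnorm.pow measurable_const)).min measurable_const)).mul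
        (((hbd2.pow measurable_const).div (hnorm.pow measurable_const)).min measurable_const))
    · exact hGmeas
  -- reorder the a.e. product statement
  rw [Measure.volume_eq_prod, ← Measure.prod_restrict] at hGlow
  have hGlow' := (Measure.ae_ae_comm m1).mp (Measure.ae_ae_of_ae_prod hGlow)
  -- find a good point x₀ near the boundary
  set S : Set (EuclideanSpace ℝ (Fin N)) := Ω ∩ {x | bdist Ω x < ε} with hSdef
  have hSopen : IsOpen S :=
    hop.inter (isOpen_Iio.preimage (continuous_infDist_pt (frontier Ω)))
  have hSne : S.Nonempty := by
    obtain ⟨z, hz⟩ := hfr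
    have hzcl : z ∈ closure Ω := hz.1
    obtain ⟨x, hxΩ, hxz⟩ := Metric.mem_closure_iff.mp hzcl ε hε
    refine ⟨x, hxΩ, ?_⟩
    have : bdist Ω x ≤ dist x z := infDist_le_dist_of_mem hz
    rw [dist_comm] at hxz
    exact lt_of_le_of_lt this hxz
  have hSpos : 0 < volume.restrict Ω S := by
    rw [Measure.restrict_apply hSopen.measurableSet]
    have : S ∩ Ω = S := Set.inter_eq_left.mpr Set.inter_subset_left
    rw [this]
    exact hSopen.measure_pos volume hSne
  have hgood := hup.and hGlow'
  have hx₀ex : ∃ x₀, x₀ ∈ S ∧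
      (((∫⁻ x in Ω, G x x₀ * ENNReal.ofReal (w x)) ≤
        ENNReal.ofReal (C₀ * bdist Ω x₀ ^ γ)) ∧
      (∀ᵐ x ∂(volume.restrict Ω),
        ENNReal.ofReal (c₀ * ‖x - x₀‖ ^ (-((N : ℝ) - 2 * s)) *
          min (bdist Ω x ^ γ / ‖x - x₀‖ ^ γ) 1 *
          min (bdist Ω x₀ ^ γ / ‖x - x₀‖ ^ γ) 1) ≤ G x x₀)) := by
    by_contra hno
    push_neg at hno
    have hSsub : S ⊆ {x | ¬ (((∫⁻ y in Ω, G y x * ENNReal.ofReal (w y)) ≤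
        ENNReal.ofReal (C₀ * bdist Ω x ^ γ)) ∧
      (∀ᵐ y ∂(volume.restrict Ω),
        ENNReal.ofReal (c₀ * ‖y - x‖ ^ (-((N : ℝ) - 2 * s)) *
          min (bdist Ω y ^ γ / ‖y - x‖ ^ γ) 1 *
          min (bdist Ω x ^ γ / ‖y - x‖ ^ γ) 1) ≤ G y x))} := by
      intro x hx hcontra
      exact hno x hx hcontra.1 (hcontra.2.mono (fun y hy => not_lt.mpr hy))
    have h0 : volume.restrict Ω {x | ¬ (((∫⁻ y in Ω, G y x * ENNReal.ofReal (w y)) ≤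
        ENNReal.ofReal (C₀ * bdist Ω x ^ γ)) ∧
      (∀ᵐ y ∂(volume.restrict Ω),
        ENNReal.ofReal (c₀ * ‖y - x‖ ^ (-((N : ℝ) - 2 * s)) *
          min (bdist Ω y ^ γ / ‖y - x‖ ^ γ) 1 *
          min (bdist Ω x ^ γ / ‖y - x‖ ^ γ) 1) ≤ G y x))} = 0 := hgood
    have := measure_mono_null hSsub h0
    exact absurd this hSpos.ne'
  obtain ⟨x₀, ⟨hx₀Ω, hx₀ε⟩, hupx₀, hGx₀⟩ := hx₀ex
  set r : ℝ := bdist Ω x₀ with hrdef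
  have hr : 0 < r := hbd_pos x₀ hx₀Ω
  have hrε : r < ε := hx₀ε
  have hr2 : 0 < r / 2 := by linarith
  have hball2 : ball x₀ (r / 2) ⊆ Ω :=
    (ball_subset_ball (by linarith)).trans (hball x₀ hx₀Ω)
  -- pointwise lower bound on the ball
  set c : ℝ := c₀ * (r / 2) ^ (-((N : ℝ) - 2 * s)) * (κ * (r / 2) ^ (γ * α)) with hcdef
  have hc : 0 ≤ c := by positivity
  have hptwise : ∀ᵐ x ∂(volume.restrict (ball x₀ (r / 2))),
      ENNReal.ofReal c ≤ G x x₀ * ENNReal.ofReal (w x) := by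
    have h1 : ∀ᵐ x ∂(volume.restrict (ball x₀ (r / 2))),
        κ * bdist Ω x ^ (γ * α) ≤ w x :=
      ae_restrict_of_ae_restrict_of_subset hball2 hwlow
    have h2 : ∀ᵐ x ∂(volume.restrict (ball x₀ (r / 2))),
        ENNReal.ofReal (c₀ * ‖x - x₀‖ ^ (-((N : ℝ) - 2 * s)) *
          min (bdist Ω x ^ γ / ‖x - x₀‖ ^ γ) 1 *
          min (bdist Ω x₀ ^ γ / ‖x - x₀‖ ^ γ) 1) ≤ G x x₀ :=
      ae_restrict_of_ae_restrict_of_subset hball2 hGx₀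
    have h3 : ∀ᵐ x ∂(volume.restrict (ball x₀ (r / 2))), x ≠ x₀ := by
      refine ae_restrict_of_ae ?_
      have : volume ({x₀} : Set (EuclideanSpace ℝ (Fin N))) = 0 := measure_singleton x₀
      rw [Filter.eventually_iff, mem_ae_iff]
      simpa using this
    have h4 : ∀ᵐ x ∂(volume.restrict (ball x₀ (r / 2))), x ∈ ball x₀ (r / 2) :=
      ae_restrict_mem measurableSet_ball
    filter_upwards [h1, h2, h3, h4] with x hw hG hxne hxball
    have hdist : dist x x₀ < r / 2 := mem_ball.mp hxball
    have hnorm_eq : ‖x - x₀‖ = dist x x₀ := (dist_eq_norm x x₀).symm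
    have hnpos : 0 < ‖x - x₀‖ := by
      rw [hnorm_eq]; exact dist_pos.mpr hxne
    have hnlt : ‖x - x₀‖ < r / 2 := by rw [hnorm_eq]; exact hdist
    have hbx : r / 2 ≤ bdist Ω x := by
      have h5 : bdist Ω x₀ ≤ bdist Ω x + dist x₀ x := infDist_le_infDist_add_dist
      have h6 : dist x₀ x < r / 2 := by rw [dist_comm]; exact hdist
      simp only [← hrdef] at h5
      linarith
    -- the two min-factors are equal to 1
    have hmin1 : min (bdist Ω x ^ γ / ‖x - x₀‖ ^ γ) 1 = 1 := by
      refine min_eq_right ?_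
      rw [le_div_iff₀ (Real.rpow_pos_of_pos hnpos γ), one_mul]
      exact Real.rpow_le_rpow hnpos.le (by linarith) hγ0.le
    have hmin2 : min (bdist Ω x₀ ^ γ / ‖x - x₀‖ ^ γ) 1 = 1 := by
      refine min_eq_right ?_
      rw [le_div_iff₀ (Real.rpow_pos_of_pos hnpos γ), one_mul]
      exact Real.rpow_le_rpow hnpos.le (by simp only [← hrdef]; linarith) hγ0.le
    rw [hmin1, hmin2] at hG
    -- compare the constants
    have hA : (r / 2) ^ (-((N : ℝ) - 2 * s)) ≤ ‖x - x₀‖ ^ (-((N : ℝ) - 2 * s)) :=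
      Real.rpow_le_rpow_of_nonpos hnpos hnlt.le (by linarith)
    have hw2 : κ * (r / 2) ^ (γ * α) ≤ w x := by
      refine le_trans ?_ hw
      have := Real.rpow_le_rpow hr2.le hbx (by positivity : (0:ℝ) ≤ γ * α)
      nlinarith [hκ.le]
    have hcle : c ≤ (c₀ * ‖x - x₀‖ ^ (-((N : ℝ) - 2 * s)) * 1 * 1) * w x := by
      rw [mul_one, mul_one, hcdef]
      have hwx : 0 ≤ w x := hwnn x
      have hk1 : 0 ≤ κ * (r / 2) ^ (γ * α) := by positivity
      have h7 : c₀ * (r / 2) ^ (-((N : ℝ) - 2 * s)) ≤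
          c₀ * ‖x - x₀‖ ^ (-((N : ℝ) - 2 * s)) :=
        mul_le_mul_of_nonneg_left hA hc₀.le
      calc c₀ * (r / 2) ^ (-((N : ℝ) - 2 * s)) * (κ * (r / 2) ^ (γ * α))
          ≤ c₀ * ‖x - x₀‖ ^ (-((N : ℝ) - 2 * s)) * (κ * (r / 2) ^ (γ * α)) :=
            mul_le_mul_of_nonneg_right h7 hk1
        _ ≤ c₀ * ‖x - x₀‖ ^ (-((N : ℝ) - 2 * s)) * w x := by
            refine mul_le_mul_of_nonneg_left hw2 ?_
            positivity
    calc ENNReal.ofReal c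
        ≤ ENNReal.ofReal ((c₀ * ‖x - x₀‖ ^ (-((N : ℝ) - 2 * s)) * 1 * 1) * w x) :=
          ENNReal.ofReal_le_ofReal hcle
      _ = ENNReal.ofReal (c₀ * ‖x - x₀‖ ^ (-((N : ℝ) - 2 * s)) * 1 * 1) *
          ENNReal.ofReal (w x) := ENNReal.ofReal_mul (by positivity)
      _ ≤ G x x₀ * ENNReal.ofReal (w x) :=
          mul_le_mul_left hG _
  -- integrate
  have hint : ENNReal.ofReal c * volume (ball x₀ (r / 2)) ≤
      ENNReal.ofReal (C₀ * r ^ γ) := by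
    calc ENNReal.ofReal c * volume (ball x₀ (r / 2))
        = ∫⁻ _ in ball x₀ (r / 2), ENNReal.ofReal c := (setLIntegral_const _ _).symm
      _ ≤ ∫⁻ x in ball x₀ (r / 2), G x x₀ * ENNReal.ofReal (w x) :=
          lintegral_mono_ae hptwise
      _ ≤ ∫⁻ x in Ω, G x x₀ * ENNReal.ofReal (w x) := lintegral_mono_set hball2
      _ ≤ ENNReal.ofReal (C₀ * bdist Ω x₀ ^ γ) := hupx₀
      _ = ENNReal.ofReal (C₀ * r ^ γ) := by rw [← hrdef]
  -- compute the volume of the ball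
  have hvol : volume (ball x₀ (r / 2)) = ENNReal.ofReal ((r / 2) ^ (N : ℝ)) * V := by
    rw [Measure.addHaar_ball volume x₀ hr2.le, hVdef]
    congr 2
    · rw [finrank_euclideanSpace_fin, ← Real.rpow_natCast]
  rw [hvol] at hint
  -- transfer to a real inequality
  have hVeq : V = ENNReal.ofReal Vt := (ENNReal.ofReal_toReal hVtop).symm
  rw [hVeq, ← ENNReal.ofReal_mul (by positivity), ← ENNReal.ofReal_mul hc] at hint
  have hreal : c * ((r / 2) ^ (N : ℝ) * Vt) ≤ C₀ * r ^ γ :=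
    (ENNReal.ofReal_le_ofReal_iff (by positivity)).mp hint
  -- simplify the powers
  have hpow : c * ((r / 2) ^ (N : ℝ) * Vt) = c₀ * κ * Vt * (r / 2) ^ β := by
    rw [hcdef]
    rw [show c₀ * (r / 2) ^ (-((N : ℝ) - 2 * s)) * (κ * (r / 2) ^ (γ * α)) *
        ((r / 2) ^ (N : ℝ) * Vt) = c₀ * κ * Vt *
        ((r / 2) ^ (-((N : ℝ) - 2 * s)) * (r / 2) ^ (γ * α) * (r / 2) ^ (N : ℝ)) by ring]
    congr 1
    rw [← Real.rpow_add hr2, ← Real.rpow_add hr2, hβdef]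
    ring_nf
  rw [hpow] at hreal
  -- divide by r ^ β and derive the contradiction
  have hsplit : C₀ * r ^ γ = C₀ * r ^ β * r ^ e := by
    rw [hedef, mul_assoc, ← Real.rpow_add hr]
    ring_nf
  have hhalf : (r / 2) ^ β = r ^ β / (2 : ℝ) ^ β :=
    Real.div_rpow hr.le (by norm_num) β
  rw [hsplit, hhalf] at hreal
  have hrβ : 0 < r ^ β := Real.rpow_pos_of_pos hr β
  have h2β : 0 < (2 : ℝ) ^ β := Real.rpow_pos_of_pos two_pos β
  have hq : 0 < r ^ β / (2:ℝ) ^ β := div_pos hrβ h2β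
  have h' : c₀ * κ * Vt * (r ^ β / 2 ^ β) ≤
      (C₀ * r ^ e * 2 ^ β) * (r ^ β / 2 ^ β) := by
    have heq : (C₀ * r ^ e * 2 ^ β) * (r ^ β / 2 ^ β) = C₀ * r ^ β * r ^ e := by
      field_simp
    rw [heq]
    exact hreal
  have hfinal : c₀ * κ * Vt ≤ C₀ * r ^ e * 2 ^ β :=
    le_of_mul_le_mul_right h' hq
  have hMle : M ≤ r ^ e := by
    rw [hMdef, div_le_iff₀ hC₀, div_le_iff₀ h2β]
    nlinarith [hfinal]
  have hrε' : r ^ e < M := by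
    calc r ^ e < ε ^ e := Real.rpow_lt_rpow hr.le hrε he
      _ = M := by rw [hεdef, Real.rpow_inv_rpow hM.le he.ne']
  linarith
end

section
/- Two-sided bounds for the subordinated kernel of a spectral-type operator: Let N ≥ 1, s ∈ (0,1), γ ∈ (0,1], let Ω ⊂ ℝ^N be a nonempty bounded open set, let M, c₀, c₁, c₂ > 0, and let Φ : Ω → (0, M]. Let H : (0,∞) × Ω × Ω → [0,∞) be measurable and satisfy: for all 0 < t ≤ 1 and all x, y ∈ Ω, c₀ min(Φ(x) t^{−γ/2}, 1) min(Φ(y) t^{−γ/2}, 1) t^{−N/2} exp(−c₁ |x−y|²/t) ≤ H(t,x,y) ≤ c₀^{−1} min(Φ(x) t^{−γ/2}, 1) min(Φ(y) t^{−γ/2}, 1) t^{−N/2} exp(−|x−y|²/(c₁ t)); and for all t ≥ 1 and all x, y ∈ Ω, H(t,x,y) ≤ c₂ Φ(x) Φ(y). Define K(x,y) := ∫₀^∞ H(t,x,y) t^{−1−s} dt. Then there exist constants 0 < k₀ ≤ k₁, depending only on N, s, γ, c₀, c₁, c₂, M and the diameter of Ω, such that for all x ≠ y in Ω: k₀ |x−y|^{−(N+2s)}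 min(Φ(x)/|x−y|^γ, 1) min(Φ(y)/|x−y|^γ, 1) ≤ K(x,y) ≤ k₁ |x−y|^{−(N+2s)} min(Φ(x)/|x−y|^γ, 1) min(Φ(y)/|x−y|^γ, 1). -/
set_option maxHeartbeats 1000000
open MeasureTheory Real Set

lemma aux_exp_le (k : ℕ) {u : ℝ} (hu : 0 < u) : Real.exp (-u) ≤ k.factorial / u ^ k := by
  have h1 : u ^ k / k.factorial ≤ Real.exp u := by
    calc u ^ k / k.factorial ≤ ∑ i ∈ Finset.range (k+1), u ^ i / i.factorial := by
          refine Finset.single_le_sum (f := fun i => u ^ i / (i.factorial : ℝ)) ?_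
            (Finset.self_mem_range_succ k)
          intro i _
          positivity
      _ ≤ Real.exp u := Real.sum_le_exp_of_nonneg hu.le _
  rw [Real.exp_neg, inv_le_comm₀ (Real.exp_pos u) (by positivity), inv_div]
  exact h1

lemma aux_sq_rpow {d γ : ℝ} (hd : 0 ≤ d) : (d ^ 2) ^ (γ / 2) = d ^ γ := by
  rw [← Real.rpow_natCast d 2, ← Real.rpow_mul hd]
  norm_num
  ring_nf

lemma aux_sq_rpow' {d a : ℝ} (hd : 0 ≤ d) : (d ^ 2) ^ a = d ^ (2 * a) := by
  rw [← Real.rpow_natCast d 2, ← Real.rpow_mul hd]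
  norm_num

lemma aux_exp_mono {c₁ t d : ℝ} (k : ℕ) (hc₁ : 0 < c₁) (ht : 0 < t) (hd : 0 < d) :
    Real.exp (-(d ^ 2 / (c₁ * t))) ≤ ((k.factorial : ℝ) * c₁ ^ k) * t ^ (k:ℝ) * d ^ (-(2*(k:ℝ))) := by
  have hu : 0 < d^2/(c₁*t) := by positivity
  have h2 : d ^ (-(2*(k:ℝ))) = ((d^2)^k)⁻¹ := by
    rw [← Real.rpow_natCast (d^2) k, aux_sq_rpow' hd.le, ← Real.rpow_neg hd.le]
  calc Real.exp (-(d ^ 2 / (c₁ * t))) ≤ k.factorial / (d^2/(c₁*t))^k := aux_exp_le k hu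
    _ = ((k.factorial : ℝ) * c₁ ^ k) * t ^ (k:ℝ) * d ^ (-(2*(k:ℝ))) := by
        rw [Real.rpow_natCast, h2, div_pow, mul_pow]
        field_simp

lemma aux_min_le_monomial {a d t γ : ℝ} (ha : 0 ≤ a) (hγ : 0 ≤ γ)
    (ht : 0 < t) (hd : 0 < d) (htd : t ≤ d ^ 2) :
    min (a * t ^ (-(γ/2))) 1 ≤ min (a / d ^ γ) 1 * (d ^ γ * t ^ (-(γ/2))) := by
  have hdt : (1:ℝ) ≤ d ^ 2 / t := (one_le_div ht).mpr htd
  have hmono : (d^2/t) ^ (γ/2) = d ^ γ * t ^ (-(γ/2)) := by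
    rw [Real.div_rpow (by positivity) ht.le, aux_sq_rpow hd.le, Real.rpow_neg ht.le,
      div_eq_mul_inv]
  rw [← hmono]
  rcases le_total (a / d ^ γ) 1 with h | h
  · rw [min_eq_left h]
    have : a / d ^ γ * (d ^ 2 / t) ^ (γ / 2) = a * t ^ (-(γ/2)) := by
      rw [Real.div_rpow (by positivity) ht.le, aux_sq_rpow hd.le, Real.rpow_neg ht.le]
      field_simp
    rw [this]
    exact min_le_left _ _
  · rw [min_eq_right h, one_mul]
    exact le_trans (min_le_right _ _) (Real.one_le_rpow hdt (by positivity))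

lemma aux_min_ge {a d t γ : ℝ} (ha : 0 ≤ a) (hγ : 0 ≤ γ)
    (ht : 0 < t) (hd : 0 < d) (htd : t ≤ d ^ 2) :
    min (a / d ^ γ) 1 ≤ min (a * t ^ (-(γ/2))) 1 := by
  refine min_le_min ?_ le_rfl
  rw [Real.rpow_neg ht.le, div_eq_mul_inv]
  gcongr
  rw [← aux_sq_rpow hd.le]
  exact Real.rpow_le_rpow ht.le htd (by positivity)

lemma aux_min_le_min2 {a d t γ : ℝ} (ha : 0 ≤ a) (hγ : 0 ≤ γ)
    (ht : 0 < t) (hd : 0 < d) (hdt : d ^ 2 ≤ t) :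
    min (a * t ^ (-(γ/2))) 1 ≤ min (a / d ^ γ) 1 := by
  refine min_le_min ?_ le_rfl
  rw [Real.rpow_neg ht.le, div_eq_mul_inv]
  have h2 : d ^ γ ≤ t ^ (γ/2) := by
    rw [← aux_sq_rpow hd.le]
    exact Real.rpow_le_rpow (by positivity) hdt (by positivity)
  exact mul_le_mul_of_nonneg_left (inv_anti₀ (Real.rpow_pos_of_pos hd γ) h2) ha

open intervalIntegral in
lemma aux_integral_Ioc_rpow {T e : ℝ} (hT : 0 < T) (he : -1 < e) :
    ∫ t in Ioc (0:ℝ) T, t ^ e = T ^ (e+1) / (e+1) := by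
  rw [← integral_of_le hT.le, integral_rpow (Or.inl he),
    Real.zero_rpow (ne_of_gt (by linarith))]
  ring

lemma aux_integrableOn_Ioc_rpow {T e : ℝ} (hT : 0 < T) (he : -1 < e) :
    IntegrableOn (fun t : ℝ => t ^ e) (Ioc (0:ℝ) T) volume := by
  have h := intervalIntegral.intervalIntegrable_rpow' (a := 0) (b := T) he
  rwa [intervalIntegrable_iff_integrableOn_Ioc_of_le hT.le] at h

/-- Two-sided bounds for the subordinated kernel of a spectral-type
operator. -/
theorem stmt16 (N : ℕ) (hN : 1 ≤ N) (s γ : ℝ)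
    (hs : s ∈ Set.Ioo (0 : ℝ) 1) (hγ : γ ∈ Set.Ioc (0 : ℝ) 1)
    (Ω : Set (EuclideanSpace ℝ (Fin N))) (hne : Ω.Nonempty) (hop : IsOpen Ω)
    (hbdd : Bornology.IsBounded Ω)
    (M c₀ c₁ c₂ : ℝ) (hM : 0 < M) (hc₀ : 0 < c₀) (hc₁ : 0 < c₁) (hc₂ : 0 < c₂)
    (Φ : EuclideanSpace ℝ (Fin N) → ℝ)
    (hΦ : ∀ x ∈ Ω, Φ x ∈ Set.Ioc (0 : ℝ) M)
    (H : ℝ → EuclideanSpace ℝ (Fin N) → EuclideanSpace ℝ (Fin N) → ℝ)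
    (hHmeas : Measurable fun p : ℝ × EuclideanSpace ℝ (Fin N) × EuclideanSpace ℝ (Fin N) =>
      H p.1 p.2.1 p.2.2)
    (hHnn : ∀ t : ℝ, 0 < t → ∀ x ∈ Ω, ∀ y ∈ Ω, 0 ≤ H t x y)
    (hHsmall : ∀ t : ℝ, 0 < t → t ≤ 1 → ∀ x ∈ Ω, ∀ y ∈ Ω,
      c₀ * min (Φ x * t ^ (-(γ / 2))) 1 * min (Φ y * t ^ (-(γ / 2))) 1 *
          t ^ (-((N : ℝ) / 2)) * Real.exp (-(c₁ * ‖x - y‖ ^ 2 / t)) ≤ H t x y ∧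
      H t x y ≤ c₀⁻¹ * min (Φ x * t ^ (-(γ / 2))) 1 * min (Φ y * t ^ (-(γ / 2))) 1 *
          t ^ (-((N : ℝ) / 2)) * Real.exp (-(‖x - y‖ ^ 2 / (c₁ * t))))
    (hHlarge : ∀ t : ℝ, 1 ≤ t → ∀ x ∈ Ω, ∀ y ∈ Ω, H t x y ≤ c₂ * Φ x * Φ y)
    (K : EuclideanSpace ℝ (Fin N) → EuclideanSpace ℝ (Fin N) → ℝ)
    (hKdef : ∀ x y, K x y = ∫ t in Set.Ioi (0 : ℝ), H t x y * t ^ (-1 - s)) :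
    ∃ k₀ k₁ : ℝ, 0 < k₀ ∧ k₀ ≤ k₁ ∧
      ∀ x ∈ Ω, ∀ y ∈ Ω, x ≠ y →
        k₀ * (‖x - y‖ ^ (-((N : ℝ) + 2 * s)) *
            min (Φ x / ‖x - y‖ ^ γ) 1 * min (Φ y / ‖x - y‖ ^ γ) 1) ≤ K x y ∧
        K x y ≤ k₁ * (‖x - y‖ ^ (-((N : ℝ) + 2 * s)) *
            min (Φ x / ‖x - y‖ ^ γ) 1 * min (Φ y / ‖x - y‖ ^ γ) 1) := by
  obtain ⟨hs0, hs1⟩ := hs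
  obtain ⟨hγ0, hγ1⟩ := hγ
  obtain ⟨D₀, hD₀⟩ := Metric.isBounded_iff.mp hbdd
  set D : ℝ := max D₀ 1 with hD_def
  have hD1 : (1:ℝ) ≤ D := le_max_right _ _
  have hDpos : (0:ℝ) < D := lt_of_lt_of_le one_pos hD1
  have hD2 : (1:ℝ) ≤ D^2 := by
    calc (1:ℝ) = 1*1 := (one_mul 1).symm
      _ ≤ D*D := mul_le_mul hD1 hD1 zero_le_one hDpos.le
      _ = D^2 := (pow_two D).symm
  -- constants
  set k : ℕ := N + 2 with hk_def
  set κ : ℝ := (k.factorial : ℝ) * c₁ ^ k with hκ_def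
  have hκpos : 0 < κ := by positivity
  set q1 : ℝ := (k:ℝ) - γ - (N:ℝ)/2 - s with hq1_def
  have hN' : (1:ℝ) ≤ (N:ℝ) := by exact_mod_cast hN
  have hq1pos : 0 < q1 := by
    rw [hq1_def, hk_def]
    push_cast
    linarith
  set A₁ : ℝ := c₀⁻¹ * κ / q1 with hA₁_def
  set A₂ : ℝ := c₀⁻¹ / ((N:ℝ)/2 + s) with hA₂_def
  set Cm : ℝ := max (D ^ γ) M with hCm_def
  have hCmpos : 0 < Cm := lt_of_lt_of_le hM (le_max_right _ _)
  set A₃ : ℝ := c₂ * Cm^2 * D ^ ((N:ℝ) + 2*s) / s with hA₃_def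
  set k₀ : ℝ := c₀ * Real.exp (-(2*(c₁*D^2))) / 2 with hk₀_def
  have hk₀pos : 0 < k₀ := by positivity
  have hA₁nn : 0 ≤ A₁ := by positivity
  have hA₂nn : 0 ≤ A₂ := by positivity
  have hA₃nn : 0 ≤ A₃ := by positivity
  refine ⟨k₀, k₀ + A₁ + A₂ + A₃, hk₀pos, by linarith, ?_⟩
  intro x hx y hy hxy
  have hΦx := hΦ x hx
  have hΦy := hΦ y hy
  set d : ℝ := ‖x - y‖ with hd_def
  have hd0 : 0 < d := by rw [hd_def]; exact norm_sub_pos_iff.mpr hxy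
  have hdD : d ≤ D := by
    rw [hd_def]
    exact le_trans (by rw [← dist_eq_norm]; exact hD₀ hx hy) (le_max_left _ _)
  set mX : ℝ := min (Φ x / d ^ γ) 1 with hmX_def
  set mY : ℝ := min (Φ y / d ^ γ) 1 with hmY_def
  have hmXpos : 0 < mX := lt_min (div_pos hΦx.1 (Real.rpow_pos_of_pos hd0 γ)) one_pos
  have hmYpos : 0 < mY := lt_min (div_pos hΦy.1 (Real.rpow_pos_of_pos hd0 γ)) one_pos
  set T₀ : ℝ := min (d^2) 1 with hT₀_def
  have hT₀pos : 0 < T₀ := lt_min (by positivity) one_pos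
  have hT₀le1 : T₀ ≤ 1 := min_le_right _ _
  have hT₀led2 : T₀ ≤ d^2 := min_le_left _ _
  set f : ℝ → ℝ := fun t => H t x y * t ^ (-1 - s) with hf_def
  have hfm : Measurable f := by
    have h1 : Measurable fun t : ℝ => H t x y :=
      hHmeas.comp (measurable_id.prodMk (measurable_const : Measurable fun _ : ℝ => (x, y)))
    exact h1.mul (by measurability)
  set G : ℝ := d ^ (-((N : ℝ) + 2 * s)) * mX * mY with hG_def
  have hGpos : 0 < G := by
    have := Real.rpow_pos_of_pos hd0 (-((N : ℝ) + 2 * s))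
    positivity
  have hfnn : ∀ t ∈ Ioi (0:ℝ), 0 ≤ f t := fun t ht =>
    mul_nonneg (hHnn t ht x hx y hy) (Real.rpow_nonneg (le_of_lt ht) _)
  -- global bound on (0,1]
  set B₀ : ℝ := c₀⁻¹ * κ * d ^ (-(2*(k:ℝ))) with hB₀_def
  have hU0 : ∀ t ∈ Ioc (0:ℝ) 1, f t ≤ B₀ := by
    rintro t ⟨ht0, ht1⟩
    have hub := (hHsmall t ht0 ht1 x hx y hy).2
    rw [← hd_def] at hub
    have hE := aux_exp_mono (c₁ := c₁) (t := t) (d := d) k hc₁ ht0 hd0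
    have hAnn : (0:ℝ) ≤ min (Φ x * t ^ (-(γ/2))) 1 :=
      le_min (mul_nonneg hΦx.1.le (Real.rpow_nonneg ht0.le _)) zero_le_one
    have hBnn : (0:ℝ) ≤ min (Φ y * t ^ (-(γ/2))) 1 :=
      le_min (mul_nonneg hΦy.1.le (Real.rpow_nonneg ht0.le _)) zero_le_one
    have hAle : min (Φ x * t ^ (-(γ/2))) 1 ≤ 1 := min_le_right _ _
    have hBle : min (Φ y * t ^ (-(γ/2))) 1 ≤ 1 := min_le_right _ _
    have hEnn : (0:ℝ) ≤ Real.exp (-(d ^ 2 / (c₁ * t))) := (Real.exp_pos _).le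
    have hMnn : (0:ℝ) ≤ κ * t ^ (k:ℝ) * d ^ (-(2*(k:ℝ))) := by
      have := Real.rpow_pos_of_pos hd0 (-(2*(k:ℝ)))
      have := Real.rpow_pos_of_pos ht0 ((k:ℝ))
      positivity
    have h1 : f t ≤ c₀⁻¹ * 1 * 1 * t ^ (-((N:ℝ)/2)) *
        (κ * t ^ (k:ℝ) * d ^ (-(2*(k:ℝ)))) * t ^ (-1 - s) := by
      rw [hf_def]
      refine le_trans (mul_le_mul_of_nonneg_right hub (Real.rpow_nonneg ht0.le _)) ?_
      have h0 : (0:ℝ) ≤ t ^ (-((N:ℝ)/2)) := Real.rpow_nonneg ht0.le _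
      have h0' : (0:ℝ) ≤ t ^ (-1-s) := Real.rpow_nonneg ht0.le _
      gcongr
    have h3 : t ^ (-((N:ℝ)/2)) * t ^ (k:ℝ) * t ^ (-1-s) = t ^ (-((N:ℝ)/2) + (k:ℝ) + (-1-s)) := by
      rw [← Real.rpow_add ht0, ← Real.rpow_add ht0]
    have h4 : t ^ (-((N:ℝ)/2) + (k:ℝ) + (-1-s)) ≤ 1 := by
      apply Real.rpow_le_one ht0.le ht1
      rw [hk_def]; push_cast; linarith
    calc f t ≤ c₀⁻¹ * 1 * 1 * t ^ (-((N:ℝ)/2)) *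
        (κ * t ^ (k:ℝ) * d ^ (-(2*(k:ℝ)))) * t ^ (-1 - s) := h1
      _ = B₀ * (t ^ (-((N:ℝ)/2)) * t ^ (k:ℝ) * t ^ (-1-s)) := by rw [hB₀_def]; ring
      _ ≤ B₀ * 1 := by
          rw [h3]
          refine mul_le_mul_of_nonneg_left h4 ?_
          have := Real.rpow_pos_of_pos hd0 (-(2*(k:ℝ)))
          positivity
      _ = B₀ := mul_one _
  have hint1 : IntegrableOn f (Ioc (0:ℝ) 1) := by
    refine Integrable.mono'
      ((integrableOn_const measure_Ioc_lt_top.ne) :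
        IntegrableOn (fun _ : ℝ => B₀) (Ioc (0:ℝ) 1) volume)
      hfm.aestronglyMeasurable ?_
    refine (ae_restrict_iff' measurableSet_Ioc).mpr (ae_of_all _ fun t ht => ?_)
    rw [Real.norm_eq_abs, abs_of_nonneg (hfnn t ht.1)]
    exact hU0 t ht
  have hint2 : IntegrableOn f (Ioi (1:ℝ)) := by
    have hg : IntegrableOn (fun t : ℝ => (c₂ * Φ x * Φ y) * t ^ (-1 - s)) (Ioi (1:ℝ)) :=
      (integrableOn_Ioi_rpow_of_lt (by linarith) one_pos).const_mul _
    refine Integrable.mono' hg hfm.aestronglyMeasurable ?_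
    refine (ae_restrict_iff' measurableSet_Ioi).mpr (ae_of_all _ fun t ht => ?_)
    have ht1 : (1:ℝ) ≤ t := le_of_lt ht
    have ht0 : (0:ℝ) < t := lt_of_lt_of_le one_pos ht1
    rw [Real.norm_eq_abs, abs_of_nonneg (hfnn t ht0)]
    exact mul_le_mul_of_nonneg_right (hHlarge t ht1 x hx y hy) (Real.rpow_nonneg ht0.le _)
  have hint0 : IntegrableOn f (Ioi (0:ℝ)) := by
    rw [← Set.Ioc_union_Ioi_eq_Ioi (zero_le_one (α := ℝ))]
    exact hint1.union hint2
  have hsplit : ∫ t in Ioi (0:ℝ), f t = (∫ t in Ioc (0:ℝ) 1, f t) + ∫ t in Ioi (1:ℝ), f t := by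
    calc ∫ t in Ioi (0:ℝ), f t = ∫ t in Ioc (0:ℝ) 1 ∪ Ioi 1, f t := by
          rw [Set.Ioc_union_Ioi_eq_Ioi (zero_le_one (α := ℝ))]
      _ = (∫ t in Ioc (0:ℝ) 1, f t) + ∫ t in Ioi (1:ℝ), f t :=
          setIntegral_union Set.Ioc_disjoint_Ioi_same measurableSet_Ioi hint1 hint2
  have hsplit2 : ∫ t in Ioc (0:ℝ) 1, f t
      = (∫ t in Ioc (0:ℝ) T₀, f t) + ∫ t in Ioc T₀ 1, f t := by
    calc ∫ t in Ioc (0:ℝ) 1, f t = ∫ t in Ioc (0:ℝ) T₀ ∪ Ioc T₀ 1, f t := by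
          rw [Set.Ioc_union_Ioc_eq_Ioc hT₀pos.le hT₀le1]
      _ = (∫ t in Ioc (0:ℝ) T₀, f t) + ∫ t in Ioc T₀ 1, f t :=
          setIntegral_union (Set.Ioc_disjoint_Ioc_of_le le_rfl) measurableSet_Ioc
            (hint1.mono_set (Set.Ioc_subset_Ioc_right hT₀le1))
            (hint1.mono_set (Set.Ioc_subset_Ioc_left hT₀pos.le))
  -- ### Upper bound pieces
  set e₁ : ℝ := (k:ℝ) + -(γ/2) + -(γ/2) + -((N:ℝ)/2) + (-1 - s) with he₁_def
  have he₁q : e₁ + 1 = q1 := by rw [he₁_def, hq1_def]; ring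
  have he₁gt : (-1:ℝ) < e₁ := by linarith
  set C₁ : ℝ := c₀⁻¹ * mX * mY * κ * (d ^ γ * d ^ γ * d ^ (-(2*(k:ℝ)))) with hC₁_def
  have hU1 : ∀ t ∈ Ioc (0:ℝ) T₀, f t ≤ C₁ * t ^ e₁ := by
    rintro t ⟨ht0, htT⟩
    have ht1 : t ≤ 1 := le_trans htT hT₀le1
    have htd2 : t ≤ d ^ 2 := le_trans htT hT₀led2
    have hub := (hHsmall t ht0 ht1 x hx y hy).2
    rw [← hd_def] at hub
    have hE := aux_exp_mono (c₁ := c₁) (t := t) (d := d) k hc₁ ht0 hd0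
    have hAle := aux_min_le_monomial hΦx.1.le hγ0.le ht0 hd0 htd2
    have hBle := aux_min_le_monomial hΦy.1.le hγ0.le ht0 hd0 htd2
    rw [← hmX_def] at hAle
    rw [← hmY_def] at hBle
    have hAnn : (0:ℝ) ≤ min (Φ x * t ^ (-(γ/2))) 1 :=
      le_min (mul_nonneg hΦx.1.le (Real.rpow_nonneg ht0.le _)) zero_le_one
    have hBnn : (0:ℝ) ≤ min (Φ y * t ^ (-(γ/2))) 1 :=
      le_min (mul_nonneg hΦy.1.le (Real.rpow_nonneg ht0.le _)) zero_le_one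
    have hdg : (0:ℝ) < d ^ γ := Real.rpow_pos_of_pos hd0 γ
    have hdk : (0:ℝ) < d ^ (-(2*(k:ℝ))) := Real.rpow_pos_of_pos hd0 _
    have htg : (0:ℝ) < t ^ (-(γ/2)) := Real.rpow_pos_of_pos ht0 _
    have htk : (0:ℝ) < t ^ ((k:ℝ)) := Real.rpow_pos_of_pos ht0 _
    have h1 : f t ≤ c₀⁻¹ * (mX * (d ^ γ * t ^ (-(γ/2)))) * (mY * (d ^ γ * t ^ (-(γ/2)))) *
        t ^ (-((N:ℝ)/2)) * (κ * t ^ (k:ℝ) * d ^ (-(2*(k:ℝ)))) * t ^ (-1 - s) := by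
      rw [hf_def]
      refine le_trans (mul_le_mul_of_nonneg_right hub (Real.rpow_nonneg ht0.le _)) ?_
      have h0 : (0:ℝ) ≤ t ^ (-((N:ℝ)/2)) := Real.rpow_nonneg ht0.le _
      have h0' : (0:ℝ) ≤ t ^ (-1-s) := Real.rpow_nonneg ht0.le _
      gcongr
    calc f t ≤ _ := h1
      _ = C₁ * (t ^ (-(γ/2)) * t ^ (-(γ/2)) * t ^ (-((N:ℝ)/2)) * t ^ ((k:ℝ)) * t ^ (-1-s)) := by
          rw [hC₁_def]; ring
      _ = C₁ * t ^ e₁ := by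
          rw [← Real.rpow_add ht0, ← Real.rpow_add ht0, ← Real.rpow_add ht0,
            ← Real.rpow_add ht0, he₁_def]
          congr 2
          ring
  have hS1 : C₁ * (T₀ ^ (e₁+1) / (e₁+1)) ≤ A₁ * G := by
    rw [he₁q]
    have hkey : d ^ γ * d ^ γ * d ^ (-(2*(k:ℝ))) * T₀ ^ q1 ≤ d ^ (-((N:ℝ) + 2*s)) := by
      rcases le_total (d^2) 1 with hc | hc
      · have hT : T₀ = d^2 := min_eq_left hc
        rw [hT, aux_sq_rpow' hd0.le, ← Real.rpow_add hd0, ← Real.rpow_add hd0,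
          ← Real.rpow_add hd0]
        apply le_of_eq
        congr 1
        rw [hq1_def, hk_def]
        push_cast
        ring
      · have hT : T₀ = 1 := min_eq_right hc
        have hd1 : (1:ℝ) ≤ d := by
          by_contra hlt
          push_neg at hlt
          have : d^2 < 1 := pow_lt_one₀ hd0.le hlt (by norm_num)
          exact absurd hc (not_le.mpr this)
        rw [hT, Real.one_rpow, mul_one, ← Real.rpow_add hd0, ← Real.rpow_add hd0]
        apply Real.rpow_le_rpow_of_exponent_le hd1
        rw [hk_def]; push_cast; linarith
    have hmm : (0:ℝ) ≤ mX * mY := mul_nonneg hmXpos.le hmYpos.le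
    calc C₁ * (T₀ ^ q1 / q1)
        = (c₀⁻¹ * κ / q1) * (d ^ γ * d ^ γ * d ^ (-(2*(k:ℝ))) * T₀ ^ q1) * (mX * mY) := by
          rw [hC₁_def]; ring
      _ ≤ (c₀⁻¹ * κ / q1) * (d ^ (-((N:ℝ)+2*s))) * (mX * mY) :=
          mul_le_mul_of_nonneg_right
            (mul_le_mul_of_nonneg_left hkey (by positivity)) hmm
      _ = A₁ * G := by rw [hA₁_def, hG_def]; ring
  have hI1 : ∫ t in Ioc (0:ℝ) T₀, f t ≤ A₁ * G := by
    have hgint : IntegrableOn (fun t : ℝ => C₁ * t ^ e₁) (Ioc (0:ℝ) T₀) :=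
      (aux_integrableOn_Ioc_rpow hT₀pos he₁gt).const_mul _
    calc ∫ t in Ioc (0:ℝ) T₀, f t ≤ ∫ t in Ioc (0:ℝ) T₀, C₁ * t ^ e₁ :=
          setIntegral_mono_on (hint1.mono_set (Set.Ioc_subset_Ioc_right hT₀le1)) hgint
            measurableSet_Ioc hU1
      _ = C₁ * ∫ t in Ioc (0:ℝ) T₀, t ^ e₁ := MeasureTheory.integral_const_mul _ _
      _ = C₁ * (T₀ ^ (e₁+1) / (e₁+1)) := by rw [aux_integral_Ioc_rpow hT₀pos he₁gt]
      _ ≤ A₁ * G := hS1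
  -- middle piece
  set e₂ : ℝ := -((N:ℝ)/2) + (-1 - s) with he₂_def
  have he₂lt : e₂ < -1 := by
    rw [he₂_def]
    have : (0:ℝ) ≤ (N:ℝ) := Nat.cast_nonneg N
    linarith
  have hI2 : ∫ t in Ioc T₀ 1, f t ≤ A₂ * G := by
    rcases le_total (d^2) 1 with hc | hc
    · have hT : T₀ = d^2 := min_eq_left hc
      have hU2 : ∀ t ∈ Ioc T₀ (1:ℝ), f t ≤ (c₀⁻¹ * mX * mY) * t ^ e₂ := by
        rintro t ⟨ht0', ht1⟩
        have ht0 : 0 < t := hT₀pos.trans ht0'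
        have htd2 : d^2 ≤ t := by rw [← hT]; exact ht0'.le
        have hub := (hHsmall t ht0 ht1 x hx y hy).2
        rw [← hd_def] at hub
        have hAle := aux_min_le_min2 hΦx.1.le hγ0.le ht0 hd0 htd2
        have hBle := aux_min_le_min2 hΦy.1.le hγ0.le ht0 hd0 htd2
        rw [← hmX_def] at hAle
        rw [← hmY_def] at hBle
        have hAnn : (0:ℝ) ≤ min (Φ x * t ^ (-(γ/2))) 1 :=
          le_min (mul_nonneg hΦx.1.le (Real.rpow_nonneg ht0.le _)) zero_le_one
        have hBnn : (0:ℝ) ≤ min (Φ y * t ^ (-(γ/2))) 1 :=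
          le_min (mul_nonneg hΦy.1.le (Real.rpow_nonneg ht0.le _)) zero_le_one
        have hE : Real.exp (-(d ^ 2 / (c₁ * t))) ≤ 1 := by
          rw [← Real.exp_zero]
          apply Real.exp_le_exp.mpr
          have : (0:ℝ) ≤ d^2/(c₁*t) := by positivity
          linarith
        have h1 : f t ≤ c₀⁻¹ * mX * mY * t ^ (-((N:ℝ)/2)) * 1 * t ^ (-1 - s) := by
          rw [hf_def]
          refine le_trans (mul_le_mul_of_nonneg_right hub (Real.rpow_nonneg ht0.le _)) ?_
          have h0 : (0:ℝ) ≤ t ^ (-((N:ℝ)/2)) := Real.rpow_nonneg ht0.le _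
          have h0' : (0:ℝ) ≤ t ^ (-1-s) := Real.rpow_nonneg ht0.le _
          gcongr
        calc f t ≤ _ := h1
          _ = (c₀⁻¹ * mX * mY) * (t ^ (-((N:ℝ)/2)) * t ^ (-1-s)) := by ring
          _ = (c₀⁻¹ * mX * mY) * t ^ e₂ := by rw [← Real.rpow_add ht0, he₂_def]
      have hgint2 : IntegrableOn (fun t : ℝ => (c₀⁻¹ * mX * mY) * t ^ e₂) (Ioc T₀ 1) :=
        ((integrableOn_Ioi_rpow_of_lt he₂lt hT₀pos).mono_set Set.Ioc_subset_Ioi_self).const_mul _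
      calc ∫ t in Ioc T₀ 1, f t ≤ ∫ t in Ioc T₀ 1, (c₀⁻¹ * mX * mY) * t ^ e₂ :=
            setIntegral_mono_on (hint1.mono_set (Set.Ioc_subset_Ioc_left hT₀pos.le)) hgint2
              measurableSet_Ioc hU2
        _ ≤ ∫ t in Ioi T₀, (c₀⁻¹ * mX * mY) * t ^ e₂ := by
            refine setIntegral_mono_set ((integrableOn_Ioi_rpow_of_lt he₂lt hT₀pos).const_mul _)
              ?_ (HasSubset.Subset.eventuallyLE Set.Ioc_subset_Ioi_self)
            refine (ae_restrict_iff' measurableSet_Ioi).mpr (ae_of_all _ fun t ht => ?_)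
            have ht0 : (0:ℝ) < t := hT₀pos.trans ht
            have := Real.rpow_nonneg ht0.le e₂
            positivity
        _ = (c₀⁻¹ * mX * mY) * ∫ t in Ioi T₀, t ^ e₂ := MeasureTheory.integral_const_mul _ _
        _ = (c₀⁻¹ * mX * mY) * (-T₀ ^ (e₂+1) / (e₂+1)) := by
            rw [integral_Ioi_rpow_of_lt he₂lt hT₀pos]
        _ = A₂ * G := by
            rw [hT, aux_sq_rpow' hd0.le, hA₂_def, hG_def,
              show 2*(e₂+1) = -((N:ℝ)+2*s) by rw [he₂_def]; ring,
              show e₂ + 1 = -((N:ℝ)/2 + s) by rw [he₂_def]; ring]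
            rw [neg_div_neg_eq]
            ring
    · have hT : T₀ = 1 := min_eq_right hc
      rw [hT]
      simp only [Set.Ioc_self, Measure.restrict_empty, integral_zero_measure]
      have hA₂G : 0 ≤ A₂ * G := mul_nonneg hA₂nn hGpos.le
      linarith
  -- tail piece
  have hI3 : ∫ t in Ioi (1:ℝ), f t ≤ A₃ * G := by
    have hg : IntegrableOn (fun t : ℝ => (c₂ * Φ x * Φ y) * t ^ (-1 - s)) (Ioi (1:ℝ)) :=
      (integrableOn_Ioi_rpow_of_lt (by linarith) one_pos).const_mul _
    have h1 : ∫ t in Ioi (1:ℝ), f t ≤ ∫ t in Ioi (1:ℝ), (c₂ * Φ x * Φ y) * t ^ (-1-s) := by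
      refine setIntegral_mono_on hint2 hg measurableSet_Ioi ?_
      intro t ht
      exact mul_le_mul_of_nonneg_right (hHlarge t (le_of_lt ht) x hx y hy)
        (Real.rpow_nonneg (lt_trans one_pos ht).le _)
    have h2 : ∫ t in Ioi (1:ℝ), (c₂ * Φ x * Φ y) * t ^ (-1-s) = (c₂ * Φ x * Φ y) * (1/s) := by
      rw [MeasureTheory.integral_const_mul, integral_Ioi_rpow_of_lt (by linarith) one_pos,
        Real.one_rpow, show (-1 - s + 1 : ℝ) = -s by ring, neg_div_neg_eq]
    have hΦxle : Φ x ≤ Cm * mX := by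
      rcases le_total (Φ x / d^γ) 1 with h | h
      · have hm : mX = Φ x / d^γ := by rw [hmX_def]; exact min_eq_left h
        have hdg : (0:ℝ) < d ^ γ := Real.rpow_pos_of_pos hd0 γ
        have hDg : d ^ γ ≤ D ^ γ := Real.rpow_le_rpow hd0.le hdD hγ0.le
        have hq : (0:ℝ) ≤ Φ x / d ^ γ := div_nonneg hΦx.1.le hdg.le
        calc Φ x = d ^ γ * (Φ x / d ^ γ) := by field_simp
          _ ≤ D ^ γ * (Φ x / d ^ γ) := mul_le_mul_of_nonneg_right hDg hq
          _ ≤ Cm * mX := by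
              rw [hm]
              exact mul_le_mul_of_nonneg_right (le_max_left _ _) hq
      · have hm : mX = 1 := by rw [hmX_def]; exact min_eq_right h
        rw [hm, mul_one]
        exact le_trans hΦx.2 (le_max_right _ _)
    have hΦyle : Φ y ≤ Cm * mY := by
      rcases le_total (Φ y / d^γ) 1 with h | h
      · have hm : mY = Φ y / d^γ := by rw [hmY_def]; exact min_eq_left h
        have hdg : (0:ℝ) < d ^ γ := Real.rpow_pos_of_pos hd0 γ
        have hDg : d ^ γ ≤ D ^ γ := Real.rpow_le_rpow hd0.le hdD hγ0.le
        have hq : (0:ℝ) ≤ Φ y / d ^ γ := div_nonneg hΦy.1.le hdg.le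
        calc Φ y = d ^ γ * (Φ y / d ^ γ) := by field_simp
          _ ≤ D ^ γ * (Φ y / d ^ γ) := mul_le_mul_of_nonneg_right hDg hq
          _ ≤ Cm * mY := by
              rw [hm]
              exact mul_le_mul_of_nonneg_right (le_max_left _ _) hq
      · have hm : mY = 1 := by rw [hmY_def]; exact min_eq_right h
        rw [hm, mul_one]
        exact le_trans hΦy.2 (le_max_right _ _)
    have hone : (1:ℝ) ≤ D ^ ((N:ℝ)+2*s) * d ^ (-((N:ℝ)+2*s)) := by
      have hmono : d ^ ((N:ℝ)+2*s) ≤ D ^ ((N:ℝ)+2*s) :=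
        Real.rpow_le_rpow hd0.le hdD (by positivity)
      have hdp : (0:ℝ) < d ^ ((N:ℝ)+2*s) := Real.rpow_pos_of_pos hd0 _
      rw [Real.rpow_neg hd0.le, ← div_eq_mul_inv, le_div_iff₀ hdp, one_mul]
      exact hmono
    have hΦΦ : c₂ * Φ x * Φ y * (1/s) ≤ A₃ * G := by
      have hstep : c₂ * Φ x * Φ y * (1/s) ≤ c₂ * (Cm * mX) * (Cm * mY) * (1/s) := by
        have h1s : (0:ℝ) ≤ 1/s := by positivity
        refine mul_le_mul_of_nonneg_right ?_ h1s
        refine mul_le_mul (mul_le_mul_of_nonneg_left hΦxle hc₂.le) hΦyle hΦy.1.le ?_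
        positivity
      calc c₂ * Φ x * Φ y * (1/s) ≤ c₂ * (Cm * mX) * (Cm * mY) * (1/s) := hstep
        _ = (c₂ * Cm^2 / s) * (mX * mY) * 1 := by ring
        _ ≤ (c₂ * Cm^2 / s) * (mX * mY) * (D ^ ((N:ℝ)+2*s) * d ^ (-((N:ℝ)+2*s))) := by
            refine mul_le_mul_of_nonneg_left hone ?_
            have := mul_nonneg hmXpos.le hmYpos.le
            positivity
        _ = A₃ * G := by rw [hA₃_def, hG_def]; ring
    calc ∫ t in Ioi (1:ℝ), f t ≤ ∫ t in Ioi (1:ℝ), (c₂ * Φ x * Φ y) * t ^ (-1-s) := h1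
      _ = c₂ * Φ x * Φ y * (1/s) := h2
      _ ≤ A₃ * G := hΦΦ
  -- ### Lower bound
  set lowC : ℝ := c₀ * mX * mY * T₀ ^ (-((N:ℝ)/2)) * Real.exp (-(2*(c₁*D^2))) * T₀ ^ (-1-s)
    with hlowC_def
  have hL : ∀ t ∈ Ioc (T₀/2) T₀, lowC ≤ f t := by
    rintro t ⟨htl, htu⟩
    have ht0 : 0 < t := lt_trans (by positivity) htl
    have ht1 : t ≤ 1 := htu.trans hT₀le1
    have htd2 : t ≤ d^2 := htu.trans hT₀led2
    have hlb := (hHsmall t ht0 ht1 x hx y hy).1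
    rw [← hd_def] at hlb
    have hA : mX ≤ min (Φ x * t ^ (-(γ/2))) 1 := by
      rw [hmX_def]
      exact aux_min_ge hΦx.1.le hγ0.le ht0 hd0 htd2
    have hB : mY ≤ min (Φ y * t ^ (-(γ/2))) 1 := by
      rw [hmY_def]
      exact aux_min_ge hΦy.1.le hγ0.le ht0 hd0 htd2
    have hTn : T₀ ^ (-((N:ℝ)/2)) ≤ t ^ (-((N:ℝ)/2)) := by
      apply Real.rpow_le_rpow_of_nonpos ht0 htu
      have : (0:ℝ) ≤ (N:ℝ) := Nat.cast_nonneg N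
      linarith
    have hT1s : T₀ ^ (-1-s) ≤ t ^ (-1-s) :=
      Real.rpow_le_rpow_of_nonpos ht0 htu (by linarith)
    have hExp : Real.exp (-(2*(c₁*D^2))) ≤ Real.exp (-(c₁ * d^2 / t)) := by
      apply Real.exp_le_exp.mpr
      rw [neg_le_neg_iff]
      have h1 : T₀ ≤ 2 * t := by linarith
      have hdT : d^2 ≤ D^2 * T₀ := by
        rcases le_total (d^2) 1 with hc | hc
        · have hT : T₀ = d^2 := min_eq_left hc
          rw [hT]
          calc d^2 = 1 * d^2 := (one_mul _).symm
            _ ≤ D^2 * d^2 := mul_le_mul_of_nonneg_right hD2 (by positivity)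
        · have hT : T₀ = 1 := min_eq_right hc
          rw [hT, mul_one]
          exact pow_le_pow_left₀ hd0.le hdD 2
      rw [div_le_iff₀ ht0]
      have h2 : c₁ * d^2 ≤ c₁ * (D^2 * T₀) := mul_le_mul_of_nonneg_left hdT hc₁.le
      have h3 : c₁ * (D^2 * T₀) ≤ c₁ * (D^2 * (2*t)) := by gcongr
      exact le_trans h2 (h3.trans_eq (by ring))
    have hstep : lowC ≤ c₀ * (min (Φ x * t ^ (-(γ/2))) 1) * (min (Φ y * t ^ (-(γ/2))) 1) *
        t ^ (-((N:ℝ)/2)) * Real.exp (-(c₁ * d^2 / t)) * t ^ (-1-s) := by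
      rw [hlowC_def]
      have hAnn : (0:ℝ) ≤ min (Φ x * t ^ (-(γ/2))) 1 := le_trans hmXpos.le hA
      have hBnn : (0:ℝ) ≤ min (Φ y * t ^ (-(γ/2))) 1 := le_trans hmYpos.le hB
      have hEnn : (0:ℝ) ≤ Real.exp (-(2*(c₁*D^2))) := (Real.exp_pos _).le
      have hnn1 : (0:ℝ) ≤ c₀ * min (Φ x * t ^ (-(γ/2))) 1 := mul_nonneg hc₀.le hAnn
      have hnn2 : (0:ℝ) ≤ c₀ * min (Φ x * t ^ (-(γ/2))) 1 * min (Φ y * t ^ (-(γ/2))) 1 :=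
        mul_nonneg hnn1 hBnn
      have hnn3 := mul_nonneg hnn2 (Real.rpow_nonneg ht0.le (-((N:ℝ)/2)))
      have h1 : c₀ * mX ≤ c₀ * min (Φ x * t ^ (-(γ/2))) 1 :=
        mul_le_mul_of_nonneg_left hA hc₀.le
      have h2 := mul_le_mul h1 hB hmYpos.le hnn1
      have h3 := mul_le_mul h2 hTn (Real.rpow_nonneg hT₀pos.le _) hnn2
      have h4 := mul_le_mul h3 hExp ((Real.exp_pos _).le) hnn3
      exact mul_le_mul h4 hT1s (Real.rpow_nonneg hT₀pos.le _)
        (mul_nonneg hnn3 ((Real.exp_pos _).le))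
    calc lowC ≤ _ := hstep
      _ = (c₀ * (min (Φ x * t ^ (-(γ/2))) 1) * (min (Φ y * t ^ (-(γ/2))) 1) *
          t ^ (-((N:ℝ)/2)) * Real.exp (-(c₁ * d^2 / t))) * t ^ (-1-s) := by ring
      _ ≤ H t x y * t ^ (-1-s) :=
          mul_le_mul_of_nonneg_right hlb (Real.rpow_nonneg ht0.le _)
      _ = f t := by rw [hf_def]
  have hJsub : Ioc (T₀/2) T₀ ⊆ Ioi (0:ℝ) := fun t ht => lt_trans (by positivity) ht.1
  have hJlow : lowC * (T₀/2) ≤ ∫ t in Ioc (T₀/2) T₀, f t := by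
    have hconst : ∫ _t in Ioc (T₀/2) T₀, lowC = lowC * (T₀/2) := by
      rw [setIntegral_const, Real.volume_real_Ioc_of_le (by linarith : T₀/2 ≤ T₀), smul_eq_mul]
      ring
    rw [← hconst]
    refine setIntegral_mono_on
      ((integrableOn_const measure_Ioc_lt_top.ne) :
        IntegrableOn (fun _ : ℝ => lowC) (Ioc (T₀/2) T₀) volume)
      (hint0.mono_set hJsub) measurableSet_Ioc hL
  have hKlow : lowC * (T₀/2) ≤ K x y := by
    rw [hKdef x y, ← hf_def]
    calc lowC * (T₀/2) ≤ ∫ t in Ioc (T₀/2) T₀, f t := hJlow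
      _ ≤ ∫ t in Ioi (0:ℝ), f t := by
          refine setIntegral_mono_set hint0 ?_ (HasSubset.Subset.eventuallyLE hJsub)
          refine (ae_restrict_iff' measurableSet_Ioi).mpr (ae_of_all _ fun t ht => hfnn t ht)
  have hfinal_low : k₀ * G ≤ lowC * (T₀/2) := by
    have hTpow : T₀ ^ (-((N:ℝ)/2)) * T₀ ^ (-1-s) * T₀ = T₀ ^ (-((N:ℝ)/2) + (-1-s) + 1) := by
      rw [Real.rpow_add hT₀pos, Real.rpow_add hT₀pos, Real.rpow_one]
    have hcmp : d ^ (-((N:ℝ)+2*s)) ≤ T₀ ^ (-((N:ℝ)/2) + (-1-s) + 1) := by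
      have h2e : -((N:ℝ)+2*s) = 2 * (-((N:ℝ)/2) + (-1-s) + 1) := by ring
      rw [h2e, ← aux_sq_rpow' hd0.le]
      refine Real.rpow_le_rpow_of_nonpos hT₀pos hT₀led2 ?_
      have : (0:ℝ) ≤ (N:ℝ) := Nat.cast_nonneg N
      linarith
    calc k₀ * G = (c₀ * Real.exp (-(2*(c₁*D^2))) / 2 * (mX * mY)) * d ^ (-((N:ℝ)+2*s)) := by
          rw [hk₀_def, hG_def]; ring
      _ ≤ (c₀ * Real.exp (-(2*(c₁*D^2))) / 2 * (mX * mY)) *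
          T₀ ^ (-((N:ℝ)/2) + (-1-s) + 1) := by
          refine mul_le_mul_of_nonneg_left hcmp ?_
          have hEnn : (0:ℝ) ≤ Real.exp (-(2*(c₁*D^2))) := (Real.exp_pos _).le
          have := mul_nonneg hmXpos.le hmYpos.le
          positivity
      _ = lowC * (T₀/2) := by rw [hlowC_def, ← hTpow]; ring
  constructor
  · exact le_trans hfinal_low hKlow
  · rw [hKdef x y, ← hf_def, hsplit, hsplit2]
    have h0 : 0 ≤ k₀ * G := mul_nonneg hk₀pos.le hGpos.le
    calc (∫ t in Ioc (0:ℝ) T₀, f t) + (∫ t in Ioc T₀ 1, f t) + ∫ t in Ioi (1:ℝ), f t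
        ≤ A₁ * G + A₂ * G + A₃ * G := add_le_add (add_le_add hI1 hI2) hI3
      _ ≤ k₀ * G + (A₁ * G + A₂ * G + A₃ * G) := le_add_of_nonneg_left h0
      _ = (k₀ + A₁ + A₂ + A₃) * G := by ring
end
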